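/- arXiv:2211.15020 — 8 statements merged into one kernel-verified Lean document; each statement's English description precedes it below -/
import Mathlib

section
/- The function ρ_h((x,s),(y,t)) = 2·log((d_Z(x,y) + max(s,t))/√(st)) defines a metric on Z × (0,∞), where (Z, d_Z) is a metric space. -/
noncomputable section

universe u v

/-- The hyperbolic-cone distance on `Z × (0,∞)`, viewed as a function on `Z × ℝ`:
`ρ_h((x,s),(y,t)) = 2 log((d(x,y) + max s t)/√(st))`. -/
def rhoH {Z : Type u} [MetricSpace Z] (p q : Z × ℝ) : ℝ :=
  2 * Real.log ((dist p.1 q.1 + max p.2 q.2) / Real.sqrt (p.2 * q.2))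

/-- The control function `η_{θ,λ}` of a (θ,λ)-power quasi-symmetry. -/
def etaPQS (theta lam t : ℝ) : ℝ := if t < 1 then lam * t ^ (1/theta) else lam * t ^ theta

/-- `f` satisfies the (θ,λ)-power quasi-symmetry inequality. -/
def IsPQS {Z : Type u} {W : Type v} [MetricSpace Z] [MetricSpace W]
    (theta lam : ℝ) (f : Z → W) : Prop :=
  ∀ x y z : Z, y ≠ z →
    dist (f x) (f z) / dist (f y) (f z) ≤ etaPQS theta lam (dist x z / dist y z)

/-- `f` is an (α,C)-snowflake mapping. -/
def IsSnowflake {Z : Type u} {W : Type v} [MetricSpace Z] [MetricSpace W]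
    (a C : ℝ) (f : Z → W) : Prop :=
  ∀ x y : Z, C⁻¹ * dist x y ^ a ≤ dist (f x) (f y) ∧ dist (f x) (f y) ≤ C * dist x y ^ a

/-- The dyadic annulus `A(x,l) = {z : 2^{-l-1} < d(z,x) ≤ 2^{-l}}`. -/
def dyadicAnnulus {Z : Type u} [MetricSpace Z] (x : Z) (l : ℤ) : Set Z :=
  {z | (2:ℝ) ^ (-l-1) < dist z x ∧ dist z x ≤ (2:ℝ) ^ (-l)}

/-- The scale spectrum `S_x` of `Z` at `x`. -/
def scaleSpectrum {Z : Type u} [MetricSpace Z] (x : Z) : Set ℤ :=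
  {l | (dyadicAnnulus x l).Nonempty}

/-- The scale map `φ_x(l) = sup{l' : ∃ y, 2^{-l-1} < d(y,x) and f(y) ∈ A_W(f(x),l')}`. -/
def phiMap {Z : Type u} {W : Type v} [MetricSpace Z] [MetricSpace W]
    (f : Z → W) (x : Z) (l : ℤ) : ℤ :=
  sSup {l' : ℤ | ∃ y : Z, (2:ℝ) ^ (-l-1) < dist y x ∧ f y ∈ dyadicAnnulus (f x) l'}

/-- `Z` has at least three points. -/
def AtLeastThree (Z : Type u) : Prop := ∃ a b c : Z, a ≠ b ∧ a ≠ c ∧ b ≠ c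

/-- `Φ : ℝ → ℝ` is the piecewise-linear extension of `φ : ℤ → ℤ` defined on `S ⊆ ℤ`:
it agrees with `φ` on `S`, is the linear interpolation on the maximal gaps of `S`,
and has slope 1 beyond a maximal (resp. minimal) element of `S`. -/
def IsLinearExtension (S : Set ℤ) (phi : ℤ → ℤ) (Phi : ℝ → ℝ) : Prop :=
  (∀ l ∈ S, Phi l = phi l) ∧
  (∀ l₁ ∈ S, ∀ l₂ ∈ S, l₁ < l₂ → (∀ l ∈ S, l ≤ l₁ ∨ l₂ ≤ l) →
    ∀ μ ∈ Set.Icc (0:ℝ) 1,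
      Phi ((1-μ) * l₁ + μ * l₂) = (1-μ) * phi l₁ + μ * phi l₂) ∧
  (∀ M ∈ S, (∀ l ∈ S, l ≤ M) → ∀ t : ℝ, (M:ℝ) ≤ t → Phi t = phi M + (t - M)) ∧
  (∀ m ∈ S, (∀ l ∈ S, m ≤ l) → ∀ t : ℝ, t ≤ (m:ℝ) → Phi t = phi m + (t - m))

/-- Real-valued variant of `IsLinearExtension`. -/
def IsLinearExtensionR (S : Set ℤ) (phi : ℤ → ℝ) (g : ℝ → ℝ) : Prop :=
  (∀ l ∈ S, g l = phi l) ∧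
  (∀ l₁ ∈ S, ∀ l₂ ∈ S, l₁ < l₂ → (∀ l ∈ S, l ≤ l₁ ∨ l₂ ≤ l) →
    ∀ μ ∈ Set.Icc (0:ℝ) 1,
      g ((1-μ) * l₁ + μ * l₂) = (1-μ) * phi l₁ + μ * phi l₂) ∧
  (∀ M ∈ S, (∀ l ∈ S, l ≤ M) → ∀ t : ℝ, (M:ℝ) ≤ t → g t = phi M + (t - M)) ∧
  (∀ m ∈ S, (∀ l ∈ S, m ≤ l) → ∀ t : ℝ, t ≤ (m:ℝ) → g t = phi m + (t - m))


lemma sqrt_le_max {s t : ℝ} (hs : 0 < s) (ht : 0 < t) : Real.sqrt (s*t) ≤ max s t := by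
  rw [show max s t = Real.sqrt ((max s t)^2) from (Real.sqrt_sq (le_max_of_le_left hs.le)).symm]
  apply Real.sqrt_le_sqrt
  rcases le_total s t with h | h
  · rw [max_eq_right h]; nlinarith
  · rw [max_eq_left h]; nlinarith

lemma one_le_ratio {Z : Type u} [MetricSpace Z] (p q : Z × ℝ) (hp : 0 < p.2) (hq : 0 < q.2) :
    1 ≤ (dist p.1 q.1 + max p.2 q.2) / Real.sqrt (p.2 * q.2) := by
  rw [le_div_iff₀ (Real.sqrt_pos.mpr (mul_pos hp hq))]
  have := sqrt_le_max hp hq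
  have := dist_nonneg (x := p.1) (y := q.1)
  linarith

/-- `ρ_h` is a metric on `Z × (0,∞)`. -/
theorem stmt0 {Z : Type u} [MetricSpace Z] :
    (∀ p q : Z × ℝ, 0 < p.2 → 0 < q.2 → 0 ≤ rhoH p q) ∧
    (∀ p q : Z × ℝ, 0 < p.2 → 0 < q.2 → (rhoH p q = 0 ↔ p = q)) ∧
    (∀ p q : Z × ℝ, 0 < p.2 → 0 < q.2 → rhoH p q = rhoH q p) ∧
    (∀ p q r : Z × ℝ, 0 < p.2 → 0 < q.2 → 0 < r.2 →
      rhoH p r ≤ rhoH p q + rhoH q r) := by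
  refine ⟨?_, ?_, ?_, ?_⟩
  · intro p q hp hq
    unfold rhoH
    have h := one_le_ratio p q hp hq
    have := Real.log_nonneg h
    linarith
  · intro p q hp hq
    constructor
    · intro h
      unfold rhoH at h
      have hr := one_le_ratio p q hp hq
      have hlog : Real.log ((dist p.1 q.1 + max p.2 q.2) / Real.sqrt (p.2 * q.2)) = 0 := by
        linarith
      have h1 : (dist p.1 q.1 + max p.2 q.2) / Real.sqrt (p.2 * q.2) = 1 := by
        rcases Real.log_eq_zero.mp hlog with h | h | h
        · exfalso; rw [h] at hr; norm_num at hr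
        · exact h
        · exfalso; rw [h] at hr; norm_num at hr
      have hs : 0 < Real.sqrt (p.2 * q.2) := Real.sqrt_pos.mpr (mul_pos hp hq)
      rw [div_eq_one_iff_eq hs.ne'] at h1
      have hle := sqrt_le_max hp hq
      have hd : dist p.1 q.1 = 0 := by
        have := dist_nonneg (x := p.1) (y := q.1); linarith
      have hmax : max p.2 q.2 = Real.sqrt (p.2 * q.2) := by linarith
      have h2 : (max p.2 q.2)^2 = p.2 * q.2 := by
        rw [hmax]; exact Real.sq_sqrt (mul_pos hp hq).le
      have h3 : p.2 = q.2 := by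
        rcases le_total p.2 q.2 with h | h
        · rw [max_eq_right h] at h2; nlinarith
        · rw [max_eq_left h] at h2; nlinarith
      have h4 : p.1 = q.1 := dist_eq_zero.mp hd
      exact Prod.ext h4 h3
    · rintro rfl
      unfold rhoH
      have : (dist p.1 p.1 + max p.2 p.2) / Real.sqrt (p.2 * p.2) = 1 := by
        rw [dist_self, max_self, Real.sqrt_mul_self hp.le, zero_add, div_self hp.ne']
      rw [this, Real.log_one, mul_zero]
  · intro p q hp hq
    unfold rhoH
    rw [dist_comm, max_comm, mul_comm p.2]
  · intro p q r hp hq hr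
    unfold rhoH
    obtain ⟨x, s⟩ := p; obtain ⟨y, t⟩ := q; obtain ⟨z, u⟩ := r
    simp only at *
    have hspos : (0:ℝ) < Real.sqrt (s*u) := Real.sqrt_pos.mpr (mul_pos hp hr)
    have hst : (0:ℝ) < Real.sqrt (s*t) := Real.sqrt_pos.mpr (mul_pos hp hq)
    have htu : (0:ℝ) < Real.sqrt (t*u) := Real.sqrt_pos.mpr (mul_pos hq hr)
    have h1 : 1 ≤ (dist x y + max s t) / Real.sqrt (s*t) := one_le_ratio (x,s) (y,t) hp hq
    have h2 : 1 ≤ (dist y z + max t u) / Real.sqrt (t*u) := one_le_ratio (y,t) (z,u) hq hr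
    have h3 : 1 ≤ (dist x z + max s u) / Real.sqrt (s*u) := one_le_ratio (x,s) (z,u) hp hr
    have key : (dist x z + max s u) / Real.sqrt (s * u) ≤
        (dist x y + max s t) / Real.sqrt (s * t) *
        ((dist y z + max t u) / Real.sqrt (t * u)) := by
      have hsqrt : Real.sqrt (s*t) * Real.sqrt (t*u) = t * Real.sqrt (s*u) := by
        rw [← Real.sqrt_mul (mul_pos hp hq).le,
          show s*t*(t*u) = t^2 * (s*u) from by ring,
          Real.sqrt_mul (sq_nonneg t), Real.sqrt_sq hq.le]
      rw [div_mul_div_comm, div_le_div_iff₀ hspos (by positivity), hsqrt]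
      have htri : dist x z ≤ dist x y + dist y z := dist_triangle _ _ _
      have ha : (0:ℝ) ≤ dist x y := dist_nonneg
      have hb : (0:ℝ) ≤ dist y z := dist_nonneg
      have hineq : (dist x z + max s u) * t ≤
          (dist x y + max s t) * (dist y z + max t u) := by
        have m1 : t ≤ max s t := le_max_right _ _
        have m2 : s ≤ max s t := le_max_left _ _
        have m3 : t ≤ max t u := le_max_left _ _
        have m4 : u ≤ max t u := le_max_right _ _
        rcases max_cases s u with ⟨he, _⟩ | ⟨he, _⟩ <;> rw [he] <;> nlinarith
      calc (dist x z + max s u) * (t * Real.sqrt (s*u))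
          = ((dist x z + max s u) * t) * Real.sqrt (s*u) := by ring
        _ ≤ ((dist x y + max s t) * (dist y z + max t u)) * Real.sqrt (s*u) :=
            mul_le_mul_of_nonneg_right hineq hspos.le
        _ = (dist x y + max s t) * (dist y z + max t u) * Real.sqrt (s*u) := by ring
    have hlog : Real.log ((dist x z + max s u) / Real.sqrt (s*u)) ≤
        Real.log ((dist x y + max s t) / Real.sqrt (s*t)) +
        Real.log ((dist y z + max t u) / Real.sqrt (t*u)) := by
      rw [← Real.log_mul (by positivity) (by positivity)]
      exact Real.log_le_log (by linarith) key
    linarith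
end
end

section
/- Let q₁ = (x₁,t₁), q₂ = (x₂,t₂) be points of Con_h(Z), let t = max(d_Z(x₁,x₂), t₁, t₂), and set p₁ = (x₁,t), p₂ = (x₂,t). Then ρ_h(q₁,p₁) + ρ_h(q₂,p₂) ≤ ρ_h(q₁,q₂) ≤ ρ_h(q₁,p₁) + ρ_h(q₂,p₂) + log 4. -/
noncomputable section

universe u v

/-- with `t = max(d(x₁,x₂), t₁, t₂)`, `p₁ = (x₁,t)`, `p₂ = (x₂,t)`,
`ρ_h(q₁,p₁) + ρ_h(q₂,p₂) ≤ ρ_h(q₁,q₂) ≤ ρ_h(q₁,p₁) + ρ_h(q₂,p₂) + log 4`. -/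
theorem stmt4 {Z : Type u} [MetricSpace Z] (x₁ x₂ : Z) (t₁ t₂ t : ℝ)
    (h1 : 0 < t₁) (h2 : 0 < t₂)
    (ht : t = max (dist x₁ x₂) (max t₁ t₂)) :
    rhoH (x₁, t₁) (x₁, t) + rhoH (x₂, t₂) (x₂, t) ≤ rhoH (x₁, t₁) (x₂, t₂) ∧
    rhoH (x₁, t₁) (x₂, t₂) ≤
      rhoH (x₁, t₁) (x₁, t) + rhoH (x₂, t₂) (x₂, t) + Real.log 4 := by
  set d := dist x₁ x₂ with hd
  set m := max t₁ t₂ with hm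
  have hd0 : 0 ≤ d := dist_nonneg
  have hm0 : 0 < m := lt_of_lt_of_le h1 (le_max_left _ _)
  have ht0 : 0 < t := ht ▸ lt_of_lt_of_le hm0 (le_max_right _ _)
  have ht1 : t₁ ≤ t := ht ▸ le_trans (le_max_left _ _) (le_max_right _ _)
  have ht2 : t₂ ≤ t := ht ▸ le_trans (le_max_right _ _) (le_max_right _ _)
  have hdm0 : 0 < d + m := by linarith
  have htdm : t ≤ d + m := by
    rw [ht]; exact max_le (by linarith) (by linarith)
  have hdm2t : d + m ≤ 2 * t := by
    have h1' : d ≤ t := ht ▸ le_max_left _ _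
    have h2' : m ≤ t := ht ▸ le_max_right _ _
    linarith
  have e1 : rhoH (x₁, t₁) (x₁, t) = Real.log t - Real.log t₁ := by
    simp only [rhoH, dist_self, zero_add, max_eq_right ht1]
    rw [Real.log_div ht0.ne' (Real.sqrt_ne_zero'.2 (by positivity)),
      Real.log_sqrt (by positivity), Real.log_mul h1.ne' ht0.ne']
    ring
  have e2 : rhoH (x₂, t₂) (x₂, t) = Real.log t - Real.log t₂ := by
    simp only [rhoH, dist_self, zero_add, max_eq_right ht2]
    rw [Real.log_div ht0.ne' (Real.sqrt_ne_zero'.2 (by positivity)),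
      Real.log_sqrt (by positivity), Real.log_mul h2.ne' ht0.ne']
    ring
  have e3 : rhoH (x₁, t₁) (x₂, t₂)
      = 2 * Real.log (d + m) - Real.log t₁ - Real.log t₂ := by
    simp only [rhoH, ← hd, ← hm]
    rw [Real.log_div hdm0.ne' (Real.sqrt_ne_zero'.2 (by positivity)),
      Real.log_sqrt (by positivity), Real.log_mul h1.ne' h2.ne']
    ring
  have hlog1 : Real.log t ≤ Real.log (d + m) := Real.log_le_log ht0 htdm
  have hlog2 : Real.log (d + m) ≤ Real.log 2 + Real.log t := by
    calc Real.log (d + m) ≤ Real.log (2 * t) := Real.log_le_log hdm0 hdm2t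
      _ = Real.log 2 + Real.log t := Real.log_mul two_ne_zero ht0.ne'
  have hlog4 : Real.log 4 = 2 * Real.log 2 := by
    rw [show (4:ℝ) = 2 ^ 2 by norm_num, Real.log_pow]; push_cast; ring
  rw [e1, e2, e3]
  constructor <;> linarith
end
end

section
/- Let f : Z → W be a (θ,λ)-power quasi-symmetry and x ∈ Z, x' = f(x). For l in the scale spectrum S_x and any y ∈ A_Z(x,l), the unique integer l' with f(y) ∈ A_W(x',l') satisfies |φ_x(l) − l'| ≤ C(θ,λ), where C(θ,λ) depends only on θ and λ. -/
noncomputable section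

universe u v

/-- for `l ∈ S_x`, `y ∈ A_Z(x,l)` and `l'` with `f(y) ∈ A_W(f(x),l')`,
one has `|φ_x(l) − l'| ≤ C(θ,λ)`. -/
theorem stmt7 (theta lam : ℝ) (htheta : 1 ≤ theta) (hlam : 1 ≤ lam) :
    ∃ C : ℝ, 0 ≤ C ∧
      ∀ (Z : Type u) (W : Type v) [MetricSpace Z] [MetricSpace W] (f : Z ≃ₜ W),
        IsPQS theta lam f →
        ∀ (x : Z) (l : ℤ), l ∈ scaleSpectrum x →
          ∀ y ∈ dyadicAnnulus x l, ∀ l' : ℤ, f y ∈ dyadicAnnulus (f x) l' →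
            |(phiMap f x l : ℝ) - (l' : ℝ)| ≤ C := by
  set N : ℤ := ⌈theta + Real.logb 2 lam⌉ + 1 with hN
  have hlogb : 0 ≤ Real.logb 2 lam := Real.logb_nonneg one_lt_two hlam
  have hNpos : (0:ℤ) ≤ N := by
    have h0 : (1:ℝ) ≤ theta + Real.logb 2 lam := by linarith
    have h1 : (1:ℤ) ≤ ⌈theta + Real.logb 2 lam⌉ := by
      have := Int.ceil_le_ceil h0
      simpa using this
    omega
  refine ⟨(N:ℝ), by exact_mod_cast hNpos, ?_⟩
  intro Z W _ _ f hpqs x l _ y hy l' hfy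
  obtain ⟨hy1, hy2⟩ := hy
  obtain ⟨hfy1, hfy2⟩ := hfy
  set T : Set ℤ := {l'' : ℤ | ∃ z : Z, (2:ℝ) ^ (-l-1) < dist z x ∧ f z ∈ dyadicAnnulus (f x) l''}
    with hT
  have hmem : l' ∈ T := ⟨y, hy1, hfy1, hfy2⟩
  -- upper bound on T
  have hub : ∀ l'' ∈ T, l'' ≤ l' + N := by
    rintro l'' ⟨z, hz1, hfz1, hfz2⟩
    have hpow : (0:ℝ) < (2:ℝ) ^ (-l-1) := zpow_pos two_pos _
    have hdz : (0:ℝ) < dist z x := hpow.trans hz1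
    have hdy : (0:ℝ) < dist y x := hpow.trans hy1
    have hzx : z ≠ x := by
      intro h; rw [h, dist_self] at hdz; exact lt_irrefl _ hdz
    have hdfz : (0:ℝ) < dist (f z) (f x) := (zpow_pos two_pos _).trans hfz1
    have hdfy : (0:ℝ) < dist (f y) (f x) := (zpow_pos two_pos _).trans hfy1
    have key := hpqs y z x hzx
    -- the ratio is at most 2
    have hrat : dist y x / dist z x ≤ 2 := by
      rw [div_le_iff₀ hdz]
      have : (2:ℝ) ^ (-l) = 2 * (2:ℝ) ^ (-l-1) := by
        rw [show -l = (-l-1)+1 by ring, zpow_add_one₀ (two_ne_zero (α := ℝ))]; ring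
      nlinarith [hy2, hz1]
    have hratpos : 0 < dist y x / dist z x := div_pos hdy hdz
    have heta : etaPQS theta lam (dist y x / dist z x) ≤ lam * (2:ℝ) ^ theta := by
      unfold etaPQS
      have h2t : (1:ℝ) ≤ (2:ℝ) ^ theta := Real.one_le_rpow one_le_two (by linarith)
      split_ifs with h
      · have : (dist y x / dist z x) ^ (1/theta) ≤ 1 :=
          Real.rpow_le_one hratpos.le h.le (by positivity)
        nlinarith
      · have : (dist y x / dist z x) ^ theta ≤ (2:ℝ) ^ theta :=
          Real.rpow_le_rpow hratpos.le hrat (by linarith)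
        nlinarith
    have hkey2 : dist (f y) (f x) ≤ lam * (2:ℝ) ^ theta * dist (f z) (f x) := by
      have := key.trans heta
      rw [div_le_iff₀ hdfz] at this
      linarith
    -- combine: 2^(-l'-1) < lam * 2^theta * 2^(-l'')
    have hfin : (2:ℝ) ^ (-l'-1) < lam * (2:ℝ) ^ theta * (2:ℝ) ^ (-l'') := by
      have h1 : lam * (2:ℝ) ^ theta * dist (f z) (f x)
          ≤ lam * (2:ℝ) ^ theta * (2:ℝ) ^ (-l'') := by
        have hlp : 0 < lam * (2:ℝ) ^ theta := by positivity
        exact mul_le_mul_of_nonneg_left hfz2 hlp.le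
      exact lt_of_lt_of_le (lt_of_lt_of_le hfy1 hkey2) h1
    -- take logs
    have hfin' : (2:ℝ) ^ ((-l'-1:ℤ):ℝ) < lam * ((2:ℝ) ^ theta * (2:ℝ) ^ ((-l'':ℤ):ℝ)) := by
      rw [Real.rpow_intCast, Real.rpow_intCast]
      calc (2:ℝ) ^ (-l'-1) < lam * (2:ℝ) ^ theta * (2:ℝ) ^ (-l'') := hfin
        _ = lam * ((2:ℝ) ^ theta * (2:ℝ) ^ (-l'')) := by ring
    have hlpos : (0:ℝ) < lam := by linarith
    have hlog := Real.logb_lt_logb (b := 2) one_lt_two (Real.rpow_pos_of_pos two_pos _) hfin'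
    rw [Real.logb_mul (ne_of_gt hlpos) (by positivity),
        Real.logb_mul (by positivity) (by positivity),
        Real.logb_rpow (by norm_num) (by norm_num), Real.logb_rpow (by norm_num) (by norm_num),
        Real.logb_rpow (by norm_num) (by norm_num)] at hlog
    -- hlog : (-l'-1 : ℝ) < logb 2 lam + (theta + (-l''))
    have hceil : theta + Real.logb 2 lam ≤ (⌈theta + Real.logb 2 lam⌉ : ℝ) := Int.le_ceil _
    have : (l'' : ℝ) < (l' + N : ℤ) := by
      push_cast [hN]
      push_cast at hlog
      linarith
    exact_mod_cast this.le
  have hbdd : BddAbove T := ⟨l' + N, hub⟩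
  have hne : T.Nonempty := ⟨l', hmem⟩
  have h1 : l' ≤ sSup T := le_csSup hbdd hmem
  have h2 : sSup T ≤ l' + N := csSup_le hne hub
  have : phiMap f x l = sSup T := rfl
  rw [this, abs_le]
  constructor
  · have : (l':ℝ) ≤ ((sSup T : ℤ) : ℝ) := by exact_mod_cast h1
    have hNr : (0:ℝ) ≤ (N:ℝ) := by exact_mod_cast hNpos
    linarith
  · have : ((sSup T : ℤ):ℝ) ≤ ((l' + N : ℤ):ℝ) := by exact_mod_cast h2
    push_cast at this
    linarith
end
end

section
/- For a (θ,λ)-power quasi-symmetry f and l₁, l₂ in the scale spectrum S_x, one has (1/θ)|l₁ − l₂| − C(θ,λ) ≤ |φ_x(l₁) − φ_x(l₂)| ≤ θ|l₁ − l₂| + C(θ,λ), where C(θ,λ) depends only on θ and λ. -/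
noncomputable section

universe u v

lemma aux_exists_annulus {r : ℝ} (hr : 0 < r) :
    ∃ l : ℤ, (2:ℝ) ^ (-l-1) < r ∧ r ≤ (2:ℝ) ^ (-l) := by
  obtain ⟨n, hn1, hn2⟩ := exists_mem_Ioc_zpow hr one_lt_two
  exact ⟨-n-1, by rw [show (-(-n-1)-1 : ℤ) = n by ring]; exact hn1,
    by rw [show (-(-n-1) : ℤ) = n+1 by ring]; exact hn2⟩

lemma eta_le_one_branch {theta lam s u : ℝ} (htheta : 1 ≤ theta) (hlam : 1 ≤ lam)
    (hs : 0 ≤ s) (hsu : s ≤ u) (hu : u ≤ 1) :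
    etaPQS theta lam s ≤ lam * u ^ (1/theta) := by
  have h0 : (0:ℝ) < lam := lt_of_lt_of_le one_pos hlam
  have ht0 : (0:ℝ) < theta := lt_of_lt_of_le one_pos htheta
  unfold etaPQS
  split_ifs with h
  · exact mul_le_mul_of_nonneg_left
      (Real.rpow_le_rpow hs hsu (div_nonneg zero_le_one ht0.le)) h0.le
  · have hs1 : s = 1 := le_antisymm (hsu.trans hu) (not_lt.mp h)
    have hu1 : u = 1 := le_antisymm hu (hs1 ▸ hsu)
    rw [hs1, hu1, Real.one_rpow, Real.one_rpow]

lemma eta_le_theta_branch {theta lam s u : ℝ} (htheta : 1 ≤ theta) (hlam : 1 ≤ lam)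
    (hs : 0 ≤ s) (hsu : s ≤ u) (hu : 1 ≤ u) :
    etaPQS theta lam s ≤ lam * u ^ theta := by
  have h0 : (0:ℝ) < lam := lt_of_lt_of_le one_pos hlam
  have ht0 : (0:ℝ) ≤ theta := le_trans zero_le_one htheta
  unfold etaPQS
  split_ifs with h
  · calc lam * s ^ (1/theta) ≤ lam * 1 :=
        mul_le_mul_of_nonneg_left
          (Real.rpow_le_one hs h.le (div_nonneg zero_le_one ht0)) h0.le
      _ ≤ lam * u ^ theta :=
        mul_le_mul_of_nonneg_left (Real.one_le_rpow hu ht0) h0.le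
  · exact mul_le_mul_of_nonneg_left (Real.rpow_le_rpow hs hsu ht0) h0.le

lemma aux_exp_lt {lam p e q : ℝ} (hlam : 0 < lam)
    (h : (2:ℝ) ^ p < lam * (2:ℝ) ^ e * (2:ℝ) ^ q) :
    p < Real.logb 2 lam + e + q := by
  have h2 : (2:ℝ) ^ p < (2:ℝ) ^ (Real.logb 2 lam + e + q) := by
    rw [Real.rpow_add two_pos, Real.rpow_add two_pos,
      Real.rpow_logb two_pos (by norm_num) hlam]
    exact h
  exact (Real.rpow_lt_rpow_left_iff one_lt_two).mp h2

lemma pqs_core {Z : Type u} {W : Type v} [MetricSpace Z] [MetricSpace W]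
    {theta lam : ℝ} {f : Z → W}
    (hf : IsPQS theta lam f) (x y₁ y₂ : Z) (h : y₂ ≠ x) (hD : 0 < dist (f y₂) (f x)) :
    dist (f y₁) (f x) ≤ etaPQS theta lam (dist y₁ x / dist y₂ x) * dist (f y₂) (f x) :=
  (div_le_iff₀ hD).mp (hf y₁ y₂ x h)

lemma phi_spec {Z : Type u} {W : Type v} [MetricSpace Z] [MetricSpace W] {theta lam : ℝ}
    (htheta : 1 ≤ theta) (hlam : 1 ≤ lam) {f : Z → W} (hinj : Function.Injective f)
    (hf : IsPQS theta lam f) (x : Z) (l : ℤ) (hl : l ∈ scaleSpectrum x) :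
    (∃ y : Z, (2:ℝ) ^ (-l-1) < dist y x ∧ f y ∈ dyadicAnnulus (f x) (phiMap f x l)) ∧
    ∀ l' : ℤ, (∃ y : Z, (2:ℝ) ^ (-l-1) < dist y x ∧ f y ∈ dyadicAnnulus (f x) l') →
      l' ≤ phiMap f x l := by
  have h0 : (0:ℝ) < lam := lt_of_lt_of_le one_pos hlam
  set T : Set ℤ :=
    {l' : ℤ | ∃ y : Z, (2:ℝ) ^ (-l-1) < dist y x ∧ f y ∈ dyadicAnnulus (f x) l'} with hT
  obtain ⟨z, hz1, hz2⟩ := hl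
  have hzpos : (0:ℝ) < (2:ℝ) ^ (-l-1) := zpow_pos two_pos _
  have hzx : z ≠ x := by
    intro hzx; rw [hzx, dist_self] at hz1; exact absurd hz1 (not_lt.mpr hzpos.le)
  have hDz : 0 < dist (f z) (f x) := dist_pos.mpr fun hc => hzx (hinj hc)
  -- nonempty
  obtain ⟨l₀, hl₀1, hl₀2⟩ := aux_exists_annulus hDz
  have hne : T.Nonempty := ⟨l₀, z, hz1, hl₀1, hl₀2⟩
  -- bounded above
  set δ : ℝ := dist (f z) (f x) / (lam * (2:ℝ) ^ theta) with hδ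
  have hδpos : 0 < δ := by
    apply div_pos hDz
    exact mul_pos h0 (Real.rpow_pos_of_pos two_pos _)
  have hbd : ∀ l' ∈ T, (l' : ℝ) ≤ -Real.logb 2 δ := by
    rintro l' ⟨y, hy1, hfy1, hfy2⟩
    have hyx : y ≠ x := by
      intro hyx; rw [hyx, dist_self] at hy1; exact absurd hy1 (not_lt.mpr hzpos.le)
    have hDy : 0 < dist (f y) (f x) := dist_pos.mpr fun hc => hyx (hinj hc)
    have hcore := pqs_core hf x z y hyx hDy
    have hratio : dist z x / dist y x ≤ 2 := by
      have h1 : dist z x / dist y x ≤ (2:ℝ) ^ (-l) / (2:ℝ) ^ (-l-1) :=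
        div_le_div₀ (zpow_pos two_pos _).le hz2 hzpos hy1.le
      have h2 : (2:ℝ) ^ (-l) / (2:ℝ) ^ (-l-1) = 2 := by
        rw [← zpow_sub₀ (two_ne_zero), show (-l) - (-l-1) = 1 by ring, zpow_one]
      linarith
    have heta : etaPQS theta lam (dist z x / dist y x) ≤ lam * (2:ℝ) ^ theta :=
      eta_le_theta_branch htheta hlam (div_nonneg dist_nonneg dist_nonneg) hratio one_le_two
    have hle : δ ≤ dist (f y) (f x) := by
      rw [hδ, div_le_iff₀ (mul_pos h0 (Real.rpow_pos_of_pos two_pos _))]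
      calc dist (f z) (f x)
          ≤ etaPQS theta lam (dist z x / dist y x) * dist (f y) (f x) := hcore
        _ ≤ (lam * (2:ℝ) ^ theta) * dist (f y) (f x) :=
            mul_le_mul_of_nonneg_right heta dist_nonneg
        _ = dist (f y) (f x) * (lam * (2:ℝ) ^ theta) := by ring
    have hle2 : δ ≤ (2:ℝ) ^ (-(l' : ℝ)) := by
      have hc : ((-l' : ℤ) : ℝ) = -(l':ℝ) := by push_cast; ring
      rw [← hc, Real.rpow_intCast]
      exact hle.trans hfy2
    have h2' : (2:ℝ) ^ (Real.logb 2 δ) ≤ (2:ℝ) ^ (-(l':ℝ)) := by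
      rw [Real.rpow_logb two_pos (by norm_num) hδpos]; exact hle2
    have := (Real.rpow_le_rpow_left_iff one_lt_two).mp h2'
    linarith
  have hbdd : BddAbove T := by
    refine ⟨⌈-Real.logb 2 δ⌉, fun l' hl' => ?_⟩
    have := (hbd l' hl').trans (Int.le_ceil _)
    exact_mod_cast this
  have hmem : phiMap f x l ∈ T := Int.csSup_mem hne hbdd
  exact ⟨hmem, fun l' hl' => le_csSup hbdd hl'⟩

lemma main_bounds {Z : Type u} {W : Type v} [MetricSpace Z] [MetricSpace W] {theta lam : ℝ}
    (htheta : 1 ≤ theta) (hlam : 1 ≤ lam) {f : Z → W} (hinj : Function.Injective f)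
    (hf : IsPQS theta lam f) (x : Z) (l₁ l₂ : ℤ) (h12 : l₁ ≤ l₂)
    (h1 : l₁ ∈ scaleSpectrum x) (h2 : l₂ ∈ scaleSpectrum x) :
    phiMap f x l₁ ≤ phiMap f x l₂ ∧
    ((phiMap f x l₂:ℝ) - phiMap f x l₁ ≤
      theta * ((l₂:ℝ) - l₁) + (theta + 2 + Real.logb 2 lam)) ∧
    ((1/theta) * ((l₂:ℝ) - l₁) - (theta + 2 + Real.logb 2 lam) ≤
      (phiMap f x l₂:ℝ) - phiMap f x l₁) := by
  have h0 : (0:ℝ) < lam := lt_of_lt_of_le one_pos hlam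
  have ht0 : (0:ℝ) < theta := lt_of_lt_of_le one_pos htheta
  have hlogb : 0 ≤ Real.logb 2 lam := Real.logb_nonneg one_lt_two hlam
  have hinvθ : 1/theta ≤ 1 := by rw [div_le_one ht0]; exact htheta
  have zr : ∀ n : ℤ, (2:ℝ) ^ n = (2:ℝ) ^ (n : ℝ) := fun n => (Real.rpow_intCast 2 n).symm
  obtain ⟨⟨y₂, hy₂, hfy₂1, hfy₂2⟩, hmax₂⟩ := phi_spec htheta hlam hinj hf x l₂ h2
  obtain ⟨⟨y, hy, hfy1, hfy2⟩, hmax₁⟩ := phi_spec htheta hlam hinj hf x l₁ h1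
  set φ₁ := phiMap f x l₁ with hφ₁
  set φ₂ := phiMap f x l₂ with hφ₂
  -- monotonicity
  have hmono : φ₁ ≤ φ₂ := by
    apply hmax₂
    refine ⟨y, lt_of_le_of_lt ?_ hy, hfy1, hfy2⟩
    apply zpow_le_zpow_right₀ one_le_two
    omega
  -- positivity facts
  have hy₂x : y₂ ≠ x := by
    intro hc; rw [hc, dist_self] at hy₂
    exact absurd hy₂ (not_lt.mpr (zpow_pos two_pos _).le)
  have hyx : y ≠ x := by
    intro hc; rw [hc, dist_self] at hy
    exact absurd hy (not_lt.mpr (zpow_pos two_pos _).le)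
  have hD₂ : 0 < dist (f y₂) (f x) := dist_pos.mpr fun hc => hy₂x (hinj hc)
  have hD : 0 < dist (f y) (f x) := dist_pos.mpr fun hc => hyx (hinj hc)
  refine ⟨hmono, ?_, ?_⟩
  · -- upper bound
    obtain ⟨y₁, hy₁l, hy₁u⟩ := h1
    have hy₁x : y₁ ≠ x := by
      intro hc; rw [hc, dist_self] at hy₁l
      exact absurd hy₁l (not_lt.mpr (zpow_pos two_pos _).le)
    have hD₁ : 0 < dist (f y₁) (f x) := dist_pos.mpr fun hc => hy₁x (hinj hc)
    obtain ⟨l'', hl''1, hl''2⟩ := aux_exists_annulus hD₁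
    have hl''φ : l'' ≤ φ₁ := hmax₁ l'' ⟨y₁, hy₁l, hl''1, hl''2⟩
    set e : ℝ := (l₂:ℝ) - l₁ + 1 with he
    have he0 : 0 ≤ e := by
      have : (l₁:ℝ) ≤ l₂ := by exact_mod_cast h12
      linarith
    have hu1 : (1:ℝ) ≤ (2:ℝ) ^ e := Real.one_le_rpow one_le_two he0
    have hratio : dist y₁ x / dist y₂ x ≤ (2:ℝ) ^ e := by
      have hq : dist y₁ x / dist y₂ x ≤ (2:ℝ) ^ (-l₁) / (2:ℝ) ^ (-l₂-1) :=
        div_le_div₀ (zpow_pos two_pos _).le hy₁u (zpow_pos two_pos _) hy₂.le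
      have heq : (2:ℝ) ^ (-l₁) / (2:ℝ) ^ (-l₂-1) = (2:ℝ) ^ e := by
        rw [zr, zr, ← Real.rpow_sub two_pos]
        congr 1
        push_cast
        ring
      rw [heq] at hq; exact hq
    have heta : etaPQS theta lam (dist y₁ x / dist y₂ x) ≤ lam * ((2:ℝ) ^ e) ^ theta :=
      eta_le_theta_branch htheta hlam (div_nonneg dist_nonneg dist_nonneg) hratio hu1
    have hchain : (2:ℝ) ^ ((-l''-1 : ℤ) : ℝ) < lam * (2:ℝ) ^ (e * theta) * (2:ℝ) ^ ((-φ₂ : ℤ) : ℝ) := by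
      rw [← zr, ← zr]
      calc (2:ℝ) ^ (-l''-1) < dist (f y₁) (f x) := hl''1
        _ ≤ etaPQS theta lam (dist y₁ x / dist y₂ x) * dist (f y₂) (f x) :=
            pqs_core hf x y₁ y₂ hy₂x hD₂
        _ ≤ (lam * ((2:ℝ) ^ e) ^ theta) * (2:ℝ) ^ (-φ₂) := by
            apply mul_le_mul heta hfy₂2 dist_nonneg
            positivity
        _ = lam * (2:ℝ) ^ (e * theta) * (2:ℝ) ^ (-φ₂) := by
            rw [Real.rpow_mul (by norm_num) e theta]
    have hlt := aux_exp_lt h0 hchain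
    push_cast at hlt
    have hcast : (l'' : ℝ) ≤ (φ₁ : ℝ) := by exact_mod_cast hl''φ
    have hexp : e * theta = theta * ((l₂:ℝ) - l₁) + theta := by rw [he]; ring
    linarith
  · -- lower bound
    rcases eq_or_lt_of_le h12 with heq | hlt12
    · subst heq
      have : (φ₁ : ℝ) ≤ (φ₂ : ℝ) := by exact_mod_cast hmono
      have hz : (l₁:ℝ) - l₁ = 0 := by ring
      rw [hz, mul_zero]
      linarith
    · obtain ⟨y₂', hy₂'l, hy₂'u⟩ := h2
      have hy₂'x : y₂' ≠ x := by
        intro hc; rw [hc, dist_self] at hy₂'l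
        exact absurd hy₂'l (not_lt.mpr (zpow_pos two_pos _).le)
      have hD₂' : 0 < dist (f y₂') (f x) := dist_pos.mpr fun hc => hy₂'x (hinj hc)
      obtain ⟨l₂'', hl₂''1, hl₂''2⟩ := aux_exists_annulus hD₂'
      have hl₂''φ : l₂'' ≤ φ₂ := hmax₂ l₂'' ⟨y₂', hy₂'l, hl₂''1, hl₂''2⟩
      set e' : ℝ := (l₁:ℝ) + 1 - l₂ with he'
      have he'0 : e' ≤ 0 := by
        have : (l₁:ℝ) + 1 ≤ l₂ := by exact_mod_cast hlt12
        linarith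
      have hu1 : (2:ℝ) ^ e' ≤ 1 :=
        Real.rpow_le_one_of_one_le_of_nonpos one_le_two he'0
      have hratio : dist y₂' x / dist y x ≤ (2:ℝ) ^ e' := by
        have hq : dist y₂' x / dist y x ≤ (2:ℝ) ^ (-l₂) / (2:ℝ) ^ (-l₁-1) :=
          div_le_div₀ (zpow_pos two_pos _).le hy₂'u (zpow_pos two_pos _) hy.le
        have heq : (2:ℝ) ^ (-l₂) / (2:ℝ) ^ (-l₁-1) = (2:ℝ) ^ e' := by
          rw [zr, zr, ← Real.rpow_sub two_pos]
          congr 1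
          push_cast
          ring
        rw [heq] at hq; exact hq
      have heta : etaPQS theta lam (dist y₂' x / dist y x) ≤ lam * ((2:ℝ) ^ e') ^ (1/theta) :=
        eta_le_one_branch htheta hlam (div_nonneg dist_nonneg dist_nonneg) hratio hu1
      have hchain : (2:ℝ) ^ ((-l₂''-1 : ℤ) : ℝ) <
          lam * (2:ℝ) ^ (e' * (1/theta)) * (2:ℝ) ^ ((-φ₁ : ℤ) : ℝ) := by
        rw [← zr, ← zr]
        calc (2:ℝ) ^ (-l₂''-1) < dist (f y₂') (f x) := hl₂''1
          _ ≤ etaPQS theta lam (dist y₂' x / dist y x) * dist (f y) (f x) :=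
              pqs_core hf x y₂' y hyx hD
          _ ≤ (lam * ((2:ℝ) ^ e') ^ (1/theta)) * (2:ℝ) ^ (-φ₁) := by
              apply mul_le_mul heta hfy2 dist_nonneg
              positivity
          _ = lam * (2:ℝ) ^ (e' * (1/theta)) * (2:ℝ) ^ (-φ₁) := by
              rw [Real.rpow_mul (by norm_num) e' (1/theta)]
      have hlt := aux_exp_lt h0 hchain
      push_cast at hlt
      have hcast : (l₂'' : ℝ) ≤ (φ₂ : ℝ) := by exact_mod_cast hl₂''φ
      have hexp : e' * (1/theta) = -((1/theta) * ((l₂:ℝ) - l₁)) + 1/theta := by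
        rw [he']; ring
      linarith

/-- for `l₁, l₂ ∈ S_x`,
`(1/θ)|l₁−l₂| − C ≤ |φ_x(l₁) − φ_x(l₂)| ≤ θ|l₁−l₂| + C`, `C = C(θ,λ)`. -/
theorem stmt9 (theta lam : ℝ) (htheta : 1 ≤ theta) (hlam : 1 ≤ lam) :
    ∃ C : ℝ, 0 ≤ C ∧
      ∀ (Z : Type u) (W : Type v) [MetricSpace Z] [MetricSpace W] (f : Z ≃ₜ W),
        IsPQS theta lam f →
        ∀ (x : Z) (l₁ l₂ : ℤ), l₁ ∈ scaleSpectrum x → l₂ ∈ scaleSpectrum x →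
          (1/theta) * |(l₁ : ℝ) - (l₂ : ℝ)| - C ≤
              |(phiMap f x l₁ : ℝ) - (phiMap f x l₂ : ℝ)| ∧
            |(phiMap f x l₁ : ℝ) - (phiMap f x l₂ : ℝ)| ≤
              theta * |(l₁ : ℝ) - (l₂ : ℝ)| + C := by
  refine ⟨theta + 2 + Real.logb 2 lam, ?_, ?_⟩
  · have hlogb : 0 ≤ Real.logb 2 lam := Real.logb_nonneg one_lt_two hlam
    linarith
  · intro Z W _ _ f hPQS x l₁ l₂ h1 h2
    have hinj : Function.Injective (f : Z → W) := f.injective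
    rcases le_total l₁ l₂ with h | h
    · obtain ⟨hm, hub, hlb⟩ := main_bounds htheta hlam hinj hPQS x l₁ l₂ h h1 h2
      have e1 : |(l₁:ℝ) - l₂| = (l₂:ℝ) - l₁ := by
        rw [abs_sub_comm]
        exact abs_of_nonneg (sub_nonneg.mpr (by exact_mod_cast h))
      have e2 : |(phiMap f x l₁ : ℝ) - (phiMap f x l₂ : ℝ)| =
          (phiMap f x l₂ : ℝ) - (phiMap f x l₁ : ℝ) := by
        rw [abs_sub_comm]
        exact abs_of_nonneg (sub_nonneg.mpr (by exact_mod_cast hm))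
      rw [e1, e2]
      exact ⟨hlb, hub⟩
    · obtain ⟨hm, hub, hlb⟩ := main_bounds htheta hlam hinj hPQS x l₂ l₁ h h2 h1
      have e1 : |(l₁:ℝ) - l₂| = (l₁:ℝ) - l₂ :=
        abs_of_nonneg (sub_nonneg.mpr (by exact_mod_cast h))
      have e2 : |(phiMap f x l₁ : ℝ) - (phiMap f x l₂ : ℝ)| =
          (phiMap f x l₁ : ℝ) - (phiMap f x l₂ : ℝ) :=
        abs_of_nonneg (sub_nonneg.mpr (by exact_mod_cast hm))
      rw [e1, e2]
      exact ⟨hlb, hub⟩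
end
end

section
/- Let f be a (θ,λ)-power quasi-symmetry and Φ_x the extended scale function at x ∈ Z. For distinct x, y ∈ Z with x' = f(x), y' = f(y), one has |log₂(1/d_W(x',y')) − Φ_x(log₂(1/d_Z(x,y)))| ≤ C(θ,λ) for a constant C(θ,λ) depending only on θ and λ. -/
noncomputable section

universe u v

private lemma eta_le' {theta lam : ℝ} (htheta : 1 ≤ theta) (hlam : 1 ≤ lam)
    {t s : ℝ} (ht : 0 ≤ t) (hs : 0 ≤ s) (hts : t ≤ 2 ^ s) :
    etaPQS theta lam t ≤ lam * 2 ^ (theta * s) := by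
  have hl0 : (0:ℝ) ≤ lam := le_trans zero_le_one hlam
  have h1 : (1:ℝ) ≤ 2 ^ (theta * s) :=
    Real.one_le_rpow one_le_two (mul_nonneg (le_trans zero_le_one htheta) hs)
  unfold etaPQS
  split
  · have : t ^ (1/theta) ≤ 1 :=
      Real.rpow_le_one ht (le_of_lt (by assumption)) (by positivity)
    nlinarith
  · have h2 : t ^ theta ≤ (2 ^ s) ^ theta :=
      Real.rpow_le_rpow ht hts (le_trans zero_le_one htheta)
    have h3 : ((2:ℝ) ^ s) ^ theta = 2 ^ (theta * s) := by
      rw [← Real.rpow_mul (by norm_num), mul_comm]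
    nlinarith [Real.rpow_nonneg (le_trans ht hts : (0:ℝ) ≤ 2 ^ s) theta]

private lemma pqs_dist_le {Z : Type u} {W : Type v} [MetricSpace Z] [MetricSpace W]
    {theta lam : ℝ} (htheta : 1 ≤ theta) (hlam : 1 ≤ lam)
    {f : Z → W} (hf : IsPQS theta lam f) (hinj : Function.Injective f)
    {x a b : Z} (hb : b ≠ x) {s : ℝ} (hs : 0 ≤ s)
    (hab : dist a x ≤ 2 ^ s * dist b x) :
    dist (f a) (f x) ≤ lam * 2 ^ (theta * s) * dist (f b) (f x) := by
  have hbx : 0 < dist b x := dist_pos.2 hb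
  have hfb : 0 < dist (f b) (f x) := dist_pos.2 fun h => hb (hinj h)
  have h := hf a b x hb
  rw [div_le_iff₀ hfb] at h
  refine h.trans ?_
  have he := eta_le' htheta hlam (t := dist a x / dist b x)
    (div_nonneg dist_nonneg hbx.le) hs ((div_le_iff₀ hbx).2 hab)
  exact mul_le_mul_of_nonneg_right he hfb.le

private def scl (d : ℝ) : ℤ := ⌊Real.logb 2 d⁻¹⌋

private lemma scl_spec {d : ℝ} (hd : 0 < d) :
    (2:ℝ) ^ (-(scl d) - 1) < d ∧ d ≤ (2:ℝ) ^ (-(scl d)) := by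
  have h2 : (1:ℝ) < 2 := one_lt_two
  set u := Real.logb 2 d⁻¹ with hu
  have hdeq : (2:ℝ) ^ (-u) = d := by
    rw [hu, Real.logb_inv, neg_neg, Real.rpow_logb two_pos (by norm_num) hd]
  have hfl : scl d = ⌊u⌋ := rfl
  constructor
  · calc (2:ℝ)^(-(scl d)-1) = (2:ℝ)^(((-(scl d)-1:ℤ)):ℝ) := (Real.rpow_intCast _ _).symm
      _ < 2^(-u) := by
          rw [Real.rpow_lt_rpow_left_iff h2, hfl]
          push_cast
          linarith [Int.lt_floor_add_one u]
      _ = d := hdeq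
  · calc d = 2^(-u) := hdeq.symm
      _ ≤ (2:ℝ)^(((-(scl d):ℤ)):ℝ) := by
          rw [Real.rpow_le_rpow_left_iff h2, hfl]
          push_cast
          linarith [Int.floor_le u]
      _ = (2:ℝ)^(-(scl d)) := Real.rpow_intCast _ _

private lemma logb2_zpow (n : ℤ) : Real.logb 2 ((2:ℝ)^n) = n := by
  rw [← Real.rpow_intCast, Real.logb_rpow (by norm_num) (by norm_num)]


/-- `|log₂(1/d_W(x',y')) − Φ_x(log₂(1/d_Z(x,y)))| ≤ C(θ,λ)`. -/
theorem stmt12 (theta lam : ℝ) (htheta : 1 ≤ theta) (hlam : 1 ≤ lam) :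
    ∃ C : ℝ, 0 ≤ C ∧
      ∀ (Z : Type u) (W : Type v) [MetricSpace Z] [MetricSpace W],
        AtLeastThree Z → AtLeastThree W →
        ∀ (f : Z ≃ₜ W), IsPQS theta lam f →
        ∀ (x y : Z), x ≠ y →
        ∀ Phi : ℝ → ℝ, IsLinearExtension (scaleSpectrum x) (phiMap f x) Phi →
          |Real.logb 2 (1 / dist (f x) (f y)) -
              Phi (Real.logb 2 (1 / dist x y))| ≤ C := by
  classical
  have hlam0 : (0:ℝ) < lam := lt_of_lt_of_le zero_lt_one hlam
  have htheta0 : (0:ℝ) ≤ theta := le_trans zero_le_one htheta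
  have hLg0 : 0 ≤ Real.logb 2 lam := Real.logb_nonneg one_lt_two hlam
  have hLg2 : Real.logb 2 lam ≤ 2 * (lam - 1) := by
    have hlog2 : (0.5:ℝ) < Real.log 2 := by linarith [Real.log_two_gt_d9]
    rw [Real.logb, div_le_iff₀ (by linarith)]
    nlinarith [Real.log_le_sub_one_of_pos hlam0]
  refine ⟨4*theta + 4*lam + 4, by nlinarith, ?_⟩
  intro Z W _ _ _ _ f hf x y hxy Phi hPhi
  set Lg := Real.logb 2 lam with hLgdef
  have hinj : Function.Injective f := f.injective
  set r := dist x y with hrdef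
  have hr : 0 < r := dist_pos.2 hxy
  set d' := dist (f x) (f y) with hd'def
  have hd' : 0 < d' := dist_pos.2 fun h => hxy (hinj h)
  set t := Real.logb 2 (1 / r) with htdef
  set t' := Real.logb 2 (1 / d') with ht'def
  set l := scl r with hldef
  obtain ⟨hrl1, hrl2⟩ := scl_spec hr
  have htinv : t = Real.logb 2 r⁻¹ := by rw [htdef, one_div]
  have ht'inv : t' = Real.logb 2 d'⁻¹ := by rw [ht'def, one_div]
  have ht1 : (l:ℝ) ≤ t := by rw [htinv]; exact Int.floor_le _
  have ht2 : t < (l:ℝ) + 1 := by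
    rw [htinv]; exact_mod_cast Int.lt_floor_add_one (Real.logb 2 r⁻¹)
  -- the witness sets
  set T : ℤ → Set ℤ := fun m =>
    {l' : ℤ | ∃ y' : Z, (2:ℝ) ^ (-m-1) < dist y' x ∧ f y' ∈ dyadicAnnulus (f x) l'} with hTdef
  have hphiT : ∀ m : ℤ, phiMap (⇑f) x m = sSup (T m) := fun m => rfl
  -- upper bound on elements of T m
  have hub : ∀ m k : ℤ, (0:ℝ) ≤ (k:ℝ) → r ≤ (2:ℝ) ^ (k + (-m-1)) →
      ∀ l' ∈ T m, (l':ℝ) ≤ t' + Lg + theta * k := by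
    intro m k hk hrm l' hl'
    obtain ⟨y', hy'1, hy'2⟩ := hl'
    have hy'x : y' ≠ x := by
      intro h
      rw [h, dist_self] at hy'1
      exact absurd hy'1 (not_lt.2 (le_of_lt (by positivity)))
    have hfy' : dist (f y') (f x) ≤ (2:ℝ) ^ (-l') := hy'2.2
    have hfy'0 : 0 < dist (f y') (f x) := dist_pos.2 fun h => hy'x (hinj h)
    have hdyx : dist y x ≤ (2:ℝ) ^ ((k:ℝ)) * dist y' x := by
      have h1 : (2:ℝ) ^ ((k:ℝ)) = (2:ℝ) ^ k := Real.rpow_intCast 2 k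
      have h2 : (2:ℝ) ^ (k + (-m-1)) = (2:ℝ) ^ k * (2:ℝ) ^ (-m-1) :=
        zpow_add₀ (by norm_num) _ _
      have h3 : (2:ℝ) ^ k * (2:ℝ) ^ (-m-1) ≤ (2:ℝ) ^ k * dist y' x :=
        mul_le_mul_of_nonneg_left hy'1.le (by positivity)
      rw [h1, dist_comm]
      calc r ≤ (2:ℝ) ^ (k + (-m-1)) := hrm
        _ = (2:ℝ) ^ k * (2:ℝ) ^ (-m-1) := h2
        _ ≤ (2:ℝ) ^ k * dist y' x := h3
    have hcore := pqs_dist_le htheta hlam hf hinj hy'x hk hdyx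
    have hd'le : d' ≤ lam * 2 ^ (theta * (k:ℝ)) * (2:ℝ) ^ (-l') := by
      rw [hd'def, dist_comm]
      exact hcore.trans (mul_le_mul_of_nonneg_left hfy' (by positivity))
    have hlogle := Real.logb_le_logb_of_le one_lt_two hd' hd'le
    rw [Real.logb_mul (by positivity) (by positivity),
      Real.logb_mul (by positivity) (by positivity),
      Real.logb_rpow (by norm_num) (by norm_num), logb2_zpow] at hlogle
    have ht'eq : t' = -Real.logb 2 d' := by rw [ht'inv, Real.logb_inv]
    push_cast at hlogle ⊢
    linarith
  -- specialized upper bound for m ≥ l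
  have hubm : ∀ m : ℤ, l ≤ m → ∀ l' ∈ T m, (l':ℝ) ≤ t' + Lg + theta * ((m:ℝ) - l + 1) := by
    intro m hm l' hl'
    have hk : (0:ℝ) ≤ ((m - l + 1 : ℤ):ℝ) := by
      push_cast
      have : (l:ℝ) ≤ m := by exact_mod_cast hm
      linarith
    have hrm : r ≤ (2:ℝ) ^ ((m - l + 1) + (-m-1)) := by
      rw [show (m - l + 1) + (-m-1) = -l by ring]; exact hrl2
    have := hub m (m - l + 1) hk hrm l' hl'
    push_cast at this ⊢
    linarith
  have hbddm : ∀ m : ℤ, l ≤ m → BddAbove (T m) := by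
    intro m hm
    refine ⟨⌈t' + Lg + theta * ((m:ℝ) - l + 1)⌉, fun l' hl' => ?_⟩
    exact_mod_cast (hubm m hm l' hl').trans (Int.le_ceil _)
  -- lower bound: scl d' ∈ T l
  have hmem : scl d' ∈ T l := by
    refine ⟨y, by rw [dist_comm]; exact hrl1, ?_⟩
    constructor
    · rw [dist_comm]; exact (scl_spec hd').1
    · rw [dist_comm]; exact (scl_spec hd').2
  have hTlne : (T l).Nonempty := ⟨scl d', hmem⟩
  have hscl_le : scl d' ≤ phiMap (⇑f) x l := by
    rw [hphiT]; exact le_csSup (hbddm l le_rfl) hmem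
  have ht'lt : t' < (scl d' : ℝ) + 1 := by
    rw [ht'inv]; exact_mod_cast Int.lt_floor_add_one (Real.logb 2 d'⁻¹)
  set a : ℝ := ((phiMap (⇑f) x l : ℤ) : ℝ) with hadef
  have hlowa : t' - 1 < a := by
    have : (scl d' : ℝ) ≤ a := by rw [hadef]; exact_mod_cast hscl_le
    linarith
  have hupa : a ≤ t' + Lg + theta := by
    have hmemSup : sSup (T l) ∈ T l := Int.csSup_mem hTlne (hbddm l le_rfl)
    have := hubm l le_rfl (sSup (T l)) hmemSup
    rw [hadef, hphiT]
    push_cast at this ⊢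
    linarith
  have hlS : l ∈ scaleSpectrum x := ⟨y, by rw [dist_comm]; exact hrl1,
    by rw [dist_comm]; exact hrl2⟩
  -- case split on whether there is a scale above l
  by_cases hS' : {m : ℤ | m ∈ scaleSpectrum x ∧ l < m}.Nonempty
  · -- interpolation case
    have hbb : BddBelow {m : ℤ | m ∈ scaleSpectrum x ∧ l < m} :=
      ⟨l, fun m hm => hm.2.le⟩
    set l₂ := sInf {m : ℤ | m ∈ scaleSpectrum x ∧ l < m} with hl₂def
    have hl₂mem := Int.csInf_mem hS' hbb
    have hl₂S : l₂ ∈ scaleSpectrum x := hl₂mem.1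
    have hll₂ : l < l₂ := hl₂mem.2
    have hgap : ∀ m ∈ scaleSpectrum x, m ≤ l ∨ l₂ ≤ m := by
      intro m hm
      by_cases h : l < m
      · exact Or.inr (csInf_le hbb ⟨hm, h⟩)
      · exact Or.inl (not_lt.1 h)
    have hll₂R : (0:ℝ) < (l₂:ℝ) - l := by
      have : (l:ℝ) < l₂ := by exact_mod_cast hll₂
      linarith
    have hll₂R1 : (1:ℝ) ≤ (l₂:ℝ) - l := by
      have : (l:ℝ) + 1 ≤ l₂ := by exact_mod_cast hll₂
      linarith
    set μ := (t - l) / ((l₂:ℝ) - l) with hμdef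
    have hμ0 : 0 ≤ μ := div_nonneg (by linarith) hll₂R.le
    have hμ1 : μ ≤ 1 := (div_le_one hll₂R).2 (by linarith)
    have hμmul : μ * ((l₂:ℝ) - l) = t - l := div_mul_cancel₀ _ hll₂R.ne'
    have hteq : (1-μ) * (l:ℝ) + μ * (l₂:ℝ) = t := by linear_combination hμmul
    have hinterp := hPhi.2.1 l hlS l₂ hl₂S hll₂ hgap μ ⟨hμ0, hμ1⟩
    rw [hteq] at hinterp
    set b : ℝ := ((phiMap (⇑f) x l₂ : ℤ) : ℝ) with hbdef
    have hPhit : Phi t = a + μ * (b - a) := by rw [hinterp]; ring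
    -- monotonicity a ≤ b
    have hTsub : T l ⊆ T l₂ := by
      intro l' hl'
      obtain ⟨y', h1, h2⟩ := hl'
      refine ⟨y', lt_of_le_of_lt ?_ h1, h2⟩
      exact zpow_le_zpow_right₀ one_le_two (by omega)
    have hab : a ≤ b := by
      rw [hadef, hbdef, Int.cast_le, hphiT, hphiT]
      exact csSup_le_csSup (hbddm l₂ hll₂.le) hTlne hTsub
    -- upper bound for b
    have hupb : b ≤ t' + Lg + theta * ((l₂:ℝ) - l + 1) := by
      have hne : (T l₂).Nonempty := hTlne.mono hTsub
      have hmemSup : sSup (T l₂) ∈ T l₂ := Int.csSup_mem hne (hbddm l₂ hll₂.le)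
      have := hubm l₂ hll₂.le (sSup (T l₂)) hmemSup
      rw [hbdef, hphiT]
      exact this
    set u := (l₂:ℝ) - l with hudef
    have hba : b - a ≤ 1 + Lg + theta * u + theta := by
      have hth : theta * (u + 1) = theta * u + theta := by ring
      linarith
    have hmuu : μ * u ≤ 1 := by rw [hμmul]; linarith
    have h2 : μ * (b - a) ≤ μ * (1 + Lg + theta * u + theta) :=
      mul_le_mul_of_nonneg_left hba hμ0
    have h3 : μ * (1 + Lg + theta * u + theta) = μ * (1 + Lg + theta) + theta * (μ * u) := by
      ring
    have h4 : theta * (μ * u) ≤ theta := by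
      have := mul_le_mul_of_nonneg_left hmuu htheta0
      simpa using this
    have h5 : μ * (1 + Lg + theta) ≤ 1 + Lg + theta := by
      have := mul_le_mul_of_nonneg_right hμ1 (show (0:ℝ) ≤ 1 + Lg + theta by linarith)
      simpa using this
    have h6 : 0 ≤ μ * (b - a) := mul_nonneg hμ0 (by linarith)
    rw [hPhit, abs_le]
    constructor <;> linarith
  · -- l is the maximum of the scale spectrum
    have hmax : ∀ m ∈ scaleSpectrum x, m ≤ l := by
      intro m hm
      by_contra h
      exact hS' ⟨m, hm, not_le.1 h⟩
    have hPhit := hPhi.2.2.1 l hlS hmax t ht1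
    rw [hPhit, abs_le]
    constructor <;> linarith
end
end

section
/- Let f be a (θ,λ)-power quasi-symmetry with extended scale functions Φ_x. For distinct x, y ∈ Z, |Φ_x(log₂(1/d_Z(x,y))) − Φ_y(log₂(1/d_Z(x,y)))| ≤ C(θ,λ) for a constant depending only on θ, λ. -/
noncomputable section

universe u v

namespace Stmt13Aux

lemma rpow_eq_zpow (n : ℤ) : (2:ℝ) ^ ((n:ℝ)) = (2:ℝ) ^ n := Real.rpow_intCast 2 n

lemma d_eq_rpow {d : ℝ} (hd : 0 < d) : d = (2:ℝ) ^ (-(Real.logb 2 (1/d))) := by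
  rw [one_div, Real.logb_inv, neg_neg, Real.rpow_logb two_pos (by norm_num) hd]

lemma mem_annulus_floor {d : ℝ} (hd : 0 < d) :
    (2:ℝ)^(-⌊Real.logb 2 (1/d)⌋-1) < d ∧ d ≤ (2:ℝ)^(-⌊Real.logb 2 (1/d)⌋) := by
  have hdr : d = (2:ℝ) ^ (-(Real.logb 2 (1/d))) := d_eq_rpow hd
  set L := Real.logb 2 (1/d) with hL
  constructor
  · rw [show d = (2:ℝ)^(-L) from hdr, ← rpow_eq_zpow,
      Real.rpow_lt_rpow_left_iff one_lt_two]
    push_cast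
    have := Int.lt_floor_add_one L
    linarith
  · rw [show d = (2:ℝ)^(-L) from hdr, ← rpow_eq_zpow,
      Real.rpow_le_rpow_left_iff one_lt_two]
    push_cast
    have := Int.floor_le L
    linarith

/-- Key bounds on `phiMap f x l` for `l ≥ l₀`, anchored at a point `w` in
the annulus `A(x, l₀)`. -/
lemma phi_bounds {Z : Type u} {W : Type v} [MetricSpace Z] [MetricSpace W]
    {theta lam : ℝ} (htheta : 1 ≤ theta) (hlam : 1 ≤ lam)
    {f : Z → W} (hf : IsPQS theta lam f) (hfi : Function.Injective f)
    {x w : Z} {l₀ : ℤ} (h1 : (2:ℝ)^(-l₀-1) < dist w x) (h2 : dist w x ≤ (2:ℝ)^(-l₀))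
    {l : ℤ} (hl : l₀ ≤ l) :
    Real.logb 2 (1 / dist (f w) (f x)) - 1 < (phiMap f x l : ℝ) ∧
    (phiMap f x l : ℝ) ≤ Real.logb 2 (1 / dist (f w) (f x)) + Real.logb 2 lam
      + theta * ((l:ℝ) - (l₀:ℝ) + 1) := by
  have hlam0 : (0:ℝ) < lam := lt_of_lt_of_le one_pos hlam
  have htheta0 : (0:ℝ) ≤ theta := le_trans zero_le_one htheta
  have hwx : (0:ℝ) < dist w x := lt_trans (by positivity) h1
  have hwxne : w ≠ x := dist_pos.mp hwx
  have hD : 0 < dist (f w) (f x) := dist_pos.mpr (fun h => hwxne (hfi h))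
  set D := dist (f w) (f x) with hDdef
  set L := Real.logb 2 (1/D) with hLdef
  have hDr : D = (2:ℝ) ^ (-L) := d_eq_rpow hD
  set S := {l' : ℤ | ∃ z : Z, (2:ℝ) ^ (-l-1) < dist z x ∧ f z ∈ dyadicAnnulus (f x) l'}
    with hSdef
  have hphi : phiMap f x l = sSup S := rfl
  set c : ℝ := Real.logb 2 lam with hcdef
  have hlamr : lam = (2:ℝ) ^ c := (Real.rpow_logb two_pos (by norm_num) hlam0).symm
  -- upper bound for each element of S
  have key : ∀ l' ∈ S, (l' : ℝ) ≤ L + c + theta * ((l:ℝ) - (l₀:ℝ) + 1) := by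
    rintro l' ⟨z, hz1, hz2, hz3⟩
    have hzx : (0:ℝ) < dist z x := lt_trans (by positivity) hz1
    have hzxne : z ≠ x := dist_pos.mp hzx
    have hfz : (0:ℝ) < dist (f z) (f x) := lt_trans (by positivity) hz2
    have hpqs := hf w z x hzxne
    have hrR : dist w x / dist z x ≤ (2:ℝ) ^ (l - l₀ + 1) := by
      calc dist w x / dist z x ≤ (2:ℝ)^(-l₀) / (2:ℝ)^(-l-1) :=
            div_le_div₀ (by positivity) h2 (by positivity) hz1.le
        _ = (2:ℝ) ^ (l - l₀ + 1) := by
            rw [← zpow_sub₀ (by norm_num : (2:ℝ) ≠ 0)]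
            ring_nf
    have hR1 : (1:ℝ) ≤ (2:ℝ) ^ (l - l₀ + 1) := by
      apply one_le_zpow₀ one_le_two
      omega
    have hr0 : (0:ℝ) ≤ dist w x / dist z x := by positivity
    set E : ℝ := ((l - l₀ + 1 : ℤ) : ℝ) * theta with hEdef
    have hRE : ((2:ℝ) ^ (l - l₀ + 1)) ^ theta = (2:ℝ) ^ E := by
      rw [hEdef, Real.rpow_mul (by norm_num : (0:ℝ) ≤ 2), rpow_eq_zpow]
    have heta : etaPQS theta lam (dist w x / dist z x) ≤ lam * (2:ℝ) ^ E := by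
      rw [← hRE]
      unfold etaPQS
      split_ifs with h
      · have h1' : (dist w x / dist z x) ^ (1/theta) ≤ 1 :=
          Real.rpow_le_one hr0 h.le (by positivity)
        have h2' : (1:ℝ) ≤ ((2:ℝ) ^ (l - l₀ + 1)) ^ theta :=
          Real.one_le_rpow hR1 htheta0
        nlinarith
      · have h1' : (dist w x / dist z x) ^ theta ≤ ((2:ℝ) ^ (l - l₀ + 1)) ^ theta :=
          Real.rpow_le_rpow hr0 hrR htheta0
        nlinarith
    have hDle : D ≤ lam * (2:ℝ) ^ E * (2:ℝ) ^ (-l') := by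
      have h3 : D / dist (f z) (f x) ≤ lam * (2:ℝ)^E := le_trans hpqs heta
      have h4 : D ≤ lam * (2:ℝ)^E * dist (f z) (f x) := by
        rw [div_le_iff₀ hfz] at h3; exact h3
      calc D ≤ lam * (2:ℝ)^E * dist (f z) (f x) := h4
        _ ≤ lam * (2:ℝ)^E * (2:ℝ)^(-l') := by
            apply mul_le_mul_of_nonneg_left hz3
            positivity
    have hfinal : -L ≤ c + E + ((-l' : ℤ) : ℝ) := by
      rw [← Real.rpow_le_rpow_left_iff (x := (2:ℝ)) one_lt_two]
      rw [Real.rpow_add two_pos, Real.rpow_add two_pos, rpow_eq_zpow]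
      rw [hDr] at hDle
      rw [← hlamr]
      exact hDle.trans (le_of_eq (by ring))
    have hE : E = ((l:ℝ) - (l₀:ℝ) + 1) * theta := by rw [hEdef]; push_cast; ring
    rw [hE] at hfinal
    push_cast at hfinal
    linarith
  have hBdd : BddAbove S := by
    refine ⟨⌊L + c + theta * ((l:ℝ) - (l₀:ℝ) + 1)⌋, fun l' hl' => ?_⟩
    exact Int.le_floor.mpr (key l' hl')
  -- membership of ⌊L⌋
  have hm : ⌊L⌋ ∈ S := by
    refine ⟨w, ?_, ?_⟩
    · calc (2:ℝ)^(-l-1) ≤ (2:ℝ)^(-l₀-1) := by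
            apply zpow_le_zpow_right₀ one_le_two; omega
        _ < dist w x := h1
    · exact mem_annulus_floor hD
  constructor
  · have h5 : (⌊L⌋ : ℤ) ≤ phiMap f x l := by
      rw [hphi]; exact le_csSup hBdd hm
    have h6 : ((⌊L⌋:ℤ):ℝ) ≤ (phiMap f x l : ℝ) := by exact_mod_cast h5
    have := Int.sub_one_lt_floor L
    linarith
  · have h5 : phiMap f x l ≤ ⌊L + c + theta * ((l:ℝ) - (l₀:ℝ) + 1)⌋ := by
      rw [hphi]
      exact csSup_le ⟨⌊L⌋, hm⟩ (fun l' hl' => Int.le_floor.mpr (key l' hl'))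
    have h6 := Int.floor_le (L + c + theta * ((l:ℝ) - (l₀:ℝ) + 1))
    have h7 : ((phiMap f x l : ℤ) : ℝ) ≤ (⌊L + c + theta * ((l:ℝ) - (l₀:ℝ) + 1)⌋ : ℝ) := by
      exact_mod_cast h5
    linarith


lemma interp_bound {S : Set ℤ} {phi : ℤ → ℤ} {Phi : ℝ → ℝ}
    (hext : IsLinearExtension S phi Phi)
    {l₀ : ℤ} (hl₀ : l₀ ∈ S) {t : ℝ} (ht1 : (l₀:ℝ) ≤ t) (ht2 : t < (l₀:ℝ) + 1)
    {L c theta : ℝ} (htheta : 1 ≤ theta) (hc : 0 ≤ c)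
    (hb : ∀ l : ℤ, l₀ ≤ l → l ∈ S →
      L - 1 < (phi l : ℝ) ∧ (phi l : ℝ) ≤ L + c + theta * ((l:ℝ) - (l₀:ℝ) + 1)) :
    |Phi t - (phi l₀ : ℝ)| ≤ theta + (theta + c + 1) := by
  by_cases hmax : ∀ l ∈ S, l ≤ l₀
  · rw [hext.2.2.1 l₀ hl₀ hmax t ht1]
    have : (phi l₀ : ℝ) + (t - (l₀:ℝ)) - (phi l₀ : ℝ) = t - (l₀:ℝ) := by ring
    rw [this, abs_of_nonneg (by linarith)]
    linarith
  · push_neg at hmax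
    obtain ⟨la, hla, hla2⟩ := hmax
    have hla2' : l₀ < la := hla2
    set T : Set ℤ := {l | l ∈ S ∧ l₀ < l} with hT
    have hTne : T.Nonempty := ⟨la, hla, hla2'⟩
    have hTbdd : BddBelow T := ⟨l₀, fun l hl => hl.2.le⟩
    set l₂ := sInf T with hl₂def
    have hl₂mem : l₂ ∈ T := Int.csInf_mem hTne hTbdd
    have hgap : ∀ l ∈ S, l ≤ l₀ ∨ l₂ ≤ l := by
      intro l hl
      by_cases h : l ≤ l₀
      · exact Or.inl h
      · exact Or.inr (csInf_le hTbdd ⟨hl, lt_of_not_ge h⟩)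
    have hl₂S : l₂ ∈ S := hl₂mem.1
    have hl₂gt : l₀ < l₂ := hl₂mem.2
    have hl₂r : (l₀:ℝ) + 1 ≤ (l₂:ℝ) := by exact_mod_cast hl₂gt
    have hden : (0:ℝ) < (l₂:ℝ) - (l₀:ℝ) := by linarith
    set μ : ℝ := (t - (l₀:ℝ)) / ((l₂:ℝ) - (l₀:ℝ)) with hμdef
    have hμ0 : 0 ≤ μ := div_nonneg (by linarith) hden.le
    have hμ1 : μ ≤ 1 := (div_le_one hden).mpr (by linarith)
    have hμl : μ * ((l₂:ℝ) - (l₀:ℝ)) = t - (l₀:ℝ) := by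
      rw [hμdef]; field_simp
    have hteq : (1-μ) * (l₀:ℝ) + μ * (l₂:ℝ) = t := by
      have : (1-μ) * (l₀:ℝ) + μ * (l₂:ℝ) = (l₀:ℝ) + μ * ((l₂:ℝ) - (l₀:ℝ)) := by ring
      rw [this, hμl]; ring
    have hPhi := hext.2.1 l₀ hl₀ l₂ hl₂S hl₂gt hgap μ ⟨hμ0, hμ1⟩
    rw [hteq] at hPhi
    rw [hPhi]
    have hdiff : (1-μ) * (phi l₀ : ℝ) + μ * (phi l₂ : ℝ) - (phi l₀ : ℝ)
        = μ * ((phi l₂ : ℝ) - (phi l₀ : ℝ)) := by ring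
    rw [hdiff]
    obtain ⟨b1l, b1u⟩ := hb l₀ le_rfl hl₀
    obtain ⟨b2l, b2u⟩ := hb l₂ hl₂gt.le hl₂S
    have hup : (phi l₂ : ℝ) - (phi l₀ : ℝ) ≤ theta * ((l₂:ℝ) - (l₀:ℝ)) + (theta + c + 1) := by
      have : (l₂:ℝ) - (l₀:ℝ) + 1 = ((l₂:ℝ) - (l₀:ℝ)) + 1 := by ring
      nlinarith
    have hlo : -(theta + c + 1) ≤ (phi l₂ : ℝ) - (phi l₀ : ℝ) := by nlinarith
    rw [abs_le]
    constructor
    · have h1 : μ * (-(theta + c + 1)) ≤ μ * ((phi l₂ : ℝ) - (phi l₀ : ℝ)) :=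
        mul_le_mul_of_nonneg_left hlo hμ0
      nlinarith
    · have h1 : μ * ((phi l₂ : ℝ) - (phi l₀ : ℝ))
          ≤ μ * (theta * ((l₂:ℝ) - (l₀:ℝ)) + (theta + c + 1)) :=
        mul_le_mul_of_nonneg_left hup hμ0
      have h2 : μ * (theta * ((l₂:ℝ) - (l₀:ℝ)) + (theta + c + 1))
          = theta * (μ * ((l₂:ℝ) - (l₀:ℝ))) + μ * (theta + c + 1) := by ring
      rw [h2, hμl] at h1
      have h3 : theta * (t - (l₀:ℝ)) ≤ theta := by nlinarith
      have h4 : μ * (theta + c + 1) ≤ theta + c + 1 := by nlinarith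
      linarith


end Stmt13Aux

/-- `|Φ_x(log₂(1/d_Z(x,y))) − Φ_y(log₂(1/d_Z(x,y)))| ≤ C(θ,λ)`. -/
theorem stmt13 (theta lam : ℝ) (htheta : 1 ≤ theta) (hlam : 1 ≤ lam) :
    ∃ C : ℝ, 0 ≤ C ∧
      ∀ (Z : Type u) (W : Type v) [MetricSpace Z] [MetricSpace W],
        AtLeastThree Z → AtLeastThree W →
        ∀ (f : Z ≃ₜ W), IsPQS theta lam f →
        ∀ (x y : Z), x ≠ y →
        ∀ Phix Phiy : ℝ → ℝ,
          IsLinearExtension (scaleSpectrum x) (phiMap f x) Phix →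
          IsLinearExtension (scaleSpectrum y) (phiMap f y) Phiy →
          |Phix (Real.logb 2 (1 / dist x y)) -
              Phiy (Real.logb 2 (1 / dist x y))| ≤ C := by
  refine ⟨5*theta + 3*Real.logb 2 lam + 3, ?_, ?_⟩
  · have := Real.logb_nonneg one_lt_two hlam
    linarith
  intro Z W _ _ _ _ f hpqs x y hxy Phix Phiy hx hy
  have hfi : Function.Injective (f : Z → W) := f.injective
  have hd : 0 < dist x y := dist_pos.mpr hxy
  set t := Real.logb 2 (1 / dist x y) with htdef
  set l₀ := ⌊t⌋ with hl₀def
  have ha := Stmt13Aux.mem_annulus_floor hd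
  rw [← htdef, ← hl₀def] at ha
  obtain ⟨ha1, ha2⟩ := ha
  have hyx1 : (2:ℝ)^(-l₀-1) < dist y x := by rw [dist_comm]; exact ha1
  have hyx2 : dist y x ≤ (2:ℝ)^(-l₀) := by rw [dist_comm]; exact ha2
  have hxl₀ : l₀ ∈ scaleSpectrum x := ⟨y, hyx1, hyx2⟩
  have hyl₀ : l₀ ∈ scaleSpectrum y := ⟨x, ha1, ha2⟩
  have ht1 : (l₀:ℝ) ≤ t := Int.floor_le t
  have ht2 : t < (l₀:ℝ) + 1 := Int.lt_floor_add_one t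
  set c := Real.logb 2 lam with hcdef
  have hc : 0 ≤ c := Real.logb_nonneg one_lt_two hlam
  set L := Real.logb 2 (1 / dist (f y) (f x)) with hLdef
  have hLsymm : Real.logb 2 (1 / dist (f x) (f y)) = L := by rw [hLdef, dist_comm]
  have hbx : ∀ l : ℤ, l₀ ≤ l → l ∈ scaleSpectrum x →
      L - 1 < (phiMap f x l : ℝ) ∧
      (phiMap f x l : ℝ) ≤ L + c + theta*((l:ℝ)-(l₀:ℝ)+1) :=
    fun l hl _ => Stmt13Aux.phi_bounds htheta hlam hpqs hfi hyx1 hyx2 hl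
  have hby : ∀ l : ℤ, l₀ ≤ l → l ∈ scaleSpectrum y →
      L - 1 < (phiMap f y l : ℝ) ∧
      (phiMap f y l : ℝ) ≤ L + c + theta*((l:ℝ)-(l₀:ℝ)+1) := by
    intro l hl _
    rw [← hLsymm]
    exact Stmt13Aux.phi_bounds htheta hlam hpqs hfi ha1 ha2 hl
  have HX := Stmt13Aux.interp_bound hx hxl₀ ht1 ht2 htheta hc hbx
  have HY := Stmt13Aux.interp_bound hy hyl₀ ht1 ht2 htheta hc hby
  obtain ⟨m1, m2⟩ := hbx l₀ le_rfl hxl₀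
  obtain ⟨m3, m4⟩ := hby l₀ le_rfl hyl₀
  have e1 : theta * ((l₀:ℝ)-(l₀:ℝ)+1) = theta := by ring
  rw [e1] at m2 m4
  have hmid : |(phiMap f x l₀ : ℝ) - (phiMap f y l₀ : ℝ)| ≤ theta + c + 1 := by
    rw [abs_le]
    constructor <;> linarith
  have tri1 : |Phix t - Phiy t| ≤ |Phix t - (phiMap f x l₀ : ℝ)|
      + |(phiMap f x l₀ : ℝ) - (phiMap f y l₀ : ℝ)|
      + |(phiMap f y l₀ : ℝ) - Phiy t| := by
    calc |Phix t - Phiy t| ≤ |Phix t - (phiMap f x l₀ : ℝ)|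
          + |(phiMap f x l₀ : ℝ) - Phiy t| := abs_sub_le _ _ _
      _ ≤ |Phix t - (phiMap f x l₀ : ℝ)| + (|(phiMap f x l₀ : ℝ) - (phiMap f y l₀ : ℝ)|
          + |(phiMap f y l₀ : ℝ) - Phiy t|) := by
            have := abs_sub_le ((phiMap f x l₀ : ℝ)) ((phiMap f y l₀ : ℝ)) (Phiy t)
            linarith
      _ = _ := by ring
  have hYabs : |(phiMap f y l₀ : ℝ) - Phiy t| ≤ theta + (theta + c + 1) := by
    rw [abs_sub_comm]; exact HY
  linarith
end
end

section
/- Let f be a (θ,λ)-power quasi-symmetry with extended scale functions Φ_x. If x ≠ y in Z, l ∈ S_x ∪ S_y, and l < log₂(1/d_Z(x,y)), then |Φ_x(l) − Φ_y(l)| ≤ C(θ,λ). -/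
noncomputable section

universe u v

namespace Stmt14


lemma exists_level {r : ℝ} (hr : 0 < r) : ∃ k : ℤ, (2:ℝ) ^ (-k-1) < r ∧ r ≤ (2:ℝ) ^ (-k) := by
  obtain ⟨n, hn⟩ := exists_mem_Ioc_zpow hr (by norm_num : (1:ℝ) < 2)
  refine ⟨-(n+1), ?_, ?_⟩
  · simpa using hn.1
  · simpa using hn.2

lemma eta_le {theta lam t : ℝ} (htheta : 1 ≤ theta) (hlam : 1 ≤ lam) (ht : 0 ≤ t) :
    etaPQS theta lam t ≤ lam * (1+t) ^ theta := by
  have h1 : (1:ℝ) ≤ (1+t) ^ theta :=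
    Real.one_le_rpow (by linarith) (by linarith)
  unfold etaPQS
  split_ifs with h
  · have : t ^ (1/theta) ≤ 1 :=
      Real.rpow_le_one ht h.le (by positivity)
    nlinarith
  · have : t ^ theta ≤ (1+t) ^ theta :=
      Real.rpow_le_rpow ht (by linarith) (by linarith)
    nlinarith

variable {Z W : Type*} [MetricSpace Z] [MetricSpace W]

lemma pqs_mul {theta lam : ℝ} {f : Z ≃ₜ W} (hf : IsPQS theta lam f)
    (htheta : 1 ≤ theta) (hlam : 1 ≤ lam) (z w b : Z) (hw : w ≠ b) :
    dist (f z) (f b) ≤ lam * (1 + dist z b / dist w b) ^ theta * dist (f w) (f b) := by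
  have hwb : 0 < dist w b := dist_pos.mpr hw
  have hfwb : 0 < dist (f w) (f b) := dist_pos.mpr (f.injective.ne hw)
  have h := hf z w b hw
  have h2 := eta_le (t := dist z b / dist w b) htheta hlam (by positivity)
  rw [div_le_iff₀ hfwb] at h
  calc dist (f z) (f b) ≤ etaPQS theta lam (dist z b / dist w b) * dist (f w) (f b) := h
    _ ≤ lam * (1 + dist z b / dist w b) ^ theta * dist (f w) (f b) := by
        apply mul_le_mul_of_nonneg_right h2 hfwb.le

/-- The analytic workhorse: comparison of dyadic levels of image distances. -/
lemma key_lev {theta lam : ℝ} {f : Z ≃ₜ W} (hf : IsPQS theta lam f)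
    (htheta : 1 ≤ theta) (hlam : 1 ≤ lam)
    {b z w : Z} {kz kw : ℤ} {a : ℝ} (ha : 0 ≤ a)
    (h1 : (2:ℝ) ^ (-kw-1) < dist (f w) (f b))
    (h2 : dist (f z) (f b) ≤ (2:ℝ) ^ (-kz))
    (hzb : z ≠ b) (hwb : w ≠ b)
    (hd : dist w b ≤ (2:ℝ) ^ a * dist z b) :
    (kz : ℝ) < kw + (theta * (a+1) + Real.logb 2 lam + 1) := by
  have hzb' : 0 < dist z b := dist_pos.mpr hzb
  have hlam0 : (0:ℝ) < lam := by linarith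
  set L := Real.logb 2 lam with hL
  have hlamL : lam = (2:ℝ) ^ L := (Real.rpow_logb (by norm_num) (by norm_num) hlam0).symm
  -- 1 + dist w b / dist z b ≤ 2^(a+1)
  have hr1 : 1 + dist w b / dist z b ≤ (2:ℝ) ^ (a+1) := by
    have : dist w b / dist z b ≤ (2:ℝ) ^ a := by
      rw [div_le_iff₀ hzb']; exact hd
    have h2a : (1:ℝ) ≤ (2:ℝ) ^ a := Real.one_le_rpow (by norm_num) ha
    have : 1 + dist w b / dist z b ≤ 2 * (2:ℝ) ^ a := by linarith
    calc 1 + dist w b / dist z b ≤ 2 * (2:ℝ) ^ a := this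
      _ = (2:ℝ) ^ (a+1) := by
          rw [Real.rpow_add (by norm_num), Real.rpow_one]; ring
  have hkey := pqs_mul hf htheta hlam w z b hzb
  have hfz : 0 < dist (f z) (f b) := dist_pos.mpr (f.injective.ne hzb)
  have hpow : lam * (1 + dist w b / dist z b) ^ theta ≤ (2:ℝ) ^ (L + theta * (a+1)) := by
    have hp : (1 + dist w b / dist z b) ^ theta ≤ ((2:ℝ) ^ (a+1)) ^ theta :=
      Real.rpow_le_rpow (by positivity) hr1 (by linarith)
    have : ((2:ℝ) ^ (a+1)) ^ theta = (2:ℝ) ^ ((a+1) * theta) :=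
      (Real.rpow_mul (by norm_num) _ _).symm
    rw [this] at hp
    rw [Real.rpow_add (by norm_num), hlamL]
    have h2L : (0:ℝ) < (2:ℝ) ^ L := Real.rpow_pos_of_pos (by norm_num) _
    calc (2:ℝ) ^ L * (1 + dist w b / dist z b) ^ theta
        ≤ (2:ℝ) ^ L * (2:ℝ) ^ ((a+1) * theta) := by
          apply mul_le_mul_of_nonneg_left hp h2L.le
      _ = (2:ℝ) ^ L * (2:ℝ) ^ (theta * (a+1)) := by ring_nf
  -- chain: 2^(-kw-1) < dist f w f b ≤ 2^(L+θ(a+1)) * dist f z f b ≤ 2^(L+θ(a+1)) * 2^(-kz)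
  have hchain : (2:ℝ) ^ ((-kw-1 : ℤ) : ℝ) < (2:ℝ) ^ (L + theta * (a+1) + (-kz : ℤ)) := by
    rw [Real.rpow_intCast]
    calc (2:ℝ) ^ (-kw-1 : ℤ) < dist (f w) (f b) := h1
      _ ≤ lam * (1 + dist w b / dist z b) ^ theta * dist (f z) (f b) := hkey
      _ ≤ (2:ℝ) ^ (L + theta * (a+1)) * (2:ℝ) ^ ((-kz : ℤ) : ℝ) := by
          rw [Real.rpow_intCast]
          exact mul_le_mul hpow h2 hfz.le (by positivity)
      _ = (2:ℝ) ^ (L + theta * (a+1) + (-kz : ℤ)) := by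
          rw [← Real.rpow_add (by norm_num)]
  rw [Real.rpow_lt_rpow_left_iff (by norm_num : (1:ℝ) < 2)] at hchain
  push_cast at hchain
  linarith


/-- The defining set of `phiMap`. -/
def phiSet (f : Z → W) (b : Z) (m : ℤ) : Set ℤ :=
  {l' : ℤ | ∃ z : Z, (2:ℝ) ^ (-m-1) < dist z b ∧ f z ∈ dyadicAnnulus (f b) l'}

lemma phiMap_eq (f : Z → W) (b : Z) (m : ℤ) : phiMap f b m = sSup (phiSet f b m) := rfl

lemma two_zpow_pos (k : ℤ) : (0:ℝ) < (2:ℝ) ^ k := zpow_pos (by norm_num) k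

lemma ne_of_dist_gt {z b : Z} {m : ℤ} (h : (2:ℝ) ^ (-m-1) < dist z b) : z ≠ b := by
  intro he; rw [he, dist_self] at h; exact absurd h (not_lt.mpr (two_zpow_pos _).le)

section ctx
variable {theta lam : ℝ} {f : Z ≃ₜ W} (hf : IsPQS theta lam f)
    (htheta : 1 ≤ theta) (hlam : 1 ≤ lam)

include hf htheta hlam

/-- membership in phiSet from a witness with its image level -/
lemma mem_phiSet {b z : Z} {m k : ℤ} (hz : (2:ℝ) ^ (-m-1) < dist z b)
    (hk1 : (2:ℝ) ^ (-k-1) < dist (f z) (f b)) (hk2 : dist (f z) (f b) ≤ (2:ℝ) ^ (-k)) :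
    k ∈ phiSet f b m := ⟨z, hz, hk1, hk2⟩

omit hf htheta hlam in
lemma phiSet_nonempty {f : Z ≃ₜ W} {b z₀ : Z} {m : ℤ} (hz₀ : (2:ℝ) ^ (-m-1) < dist z₀ b) :
    (phiSet (⇑f) b m).Nonempty := by
  have hz0b : z₀ ≠ b := ne_of_dist_gt hz₀
  have hpos : 0 < dist (f z₀) (f b) := dist_pos.mpr (f.injective.ne hz0b)
  obtain ⟨k, hk1, hk2⟩ := exists_level hpos
  exact ⟨k, z₀, hz₀, hk1, hk2⟩

lemma phiSet_bddAbove {b z₀ : Z} {m : ℤ} (hz₀ : (2:ℝ) ^ (-m-1) < dist z₀ b) :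
    BddAbove (phiSet (⇑f) b m) := by
  have hz0b : z₀ ≠ b := ne_of_dist_gt hz₀
  have hpos : 0 < dist (f z₀) (f b) := dist_pos.mpr (f.injective.ne hz0b)
  obtain ⟨k₀, hk01, hk02⟩ := exists_level hpos
  set a : ℝ := Real.logb 2 (dist z₀ b) + (m+1) with haDef
  have hd0 : 0 < dist z₀ b := dist_pos.mpr hz0b
  have h2a : (2:ℝ) ^ a = dist z₀ b * (2:ℝ) ^ ((m:ℝ)+1) := by
    rw [haDef, Real.rpow_add (by norm_num), Real.rpow_logb (by norm_num) (by norm_num) hd0]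
  have ha : 0 ≤ a := by
    have h1 : (1:ℝ) < (2:ℝ) ^ a := by
      rw [h2a]
      have hm : (2:ℝ) ^ (-m-1) * (2:ℝ) ^ ((m:ℝ)+1) = 1 := by
        rw [← Real.rpow_intCast 2 (-m-1), ← Real.rpow_add (by norm_num)]
        push_cast; norm_num
      calc (1:ℝ) = (2:ℝ) ^ (-m-1) * (2:ℝ) ^ ((m:ℝ)+1) := hm.symm
        _ < dist z₀ b * (2:ℝ) ^ ((m:ℝ)+1) := by
            apply mul_lt_mul_of_pos_right hz₀ (Real.rpow_pos_of_pos (by norm_num) _)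
    by_contra hneg
    push_neg at hneg
    have : (2:ℝ) ^ a < (2:ℝ) ^ (0:ℝ) :=
      Real.rpow_lt_rpow_left_iff (by norm_num : (1:ℝ) < 2) |>.mpr hneg
    rw [Real.rpow_zero] at this; linarith
  refine ⟨⌈(k₀:ℝ) + (theta * (a+1) + Real.logb 2 lam + 1)⌉, fun k hk => ?_⟩
  obtain ⟨z, hz, hk1, hk2⟩ := hk
  have hzb : z ≠ b := ne_of_dist_gt hz
  have hd : dist z₀ b ≤ (2:ℝ) ^ a * dist z b := by
    rw [h2a]
    have : (1:ℝ) ≤ (2:ℝ) ^ ((m:ℝ)+1) * dist z b := by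
      have hm : (2:ℝ) ^ ((m:ℝ)+1) * (2:ℝ) ^ (-m-1) = 1 := by
        rw [← Real.rpow_intCast 2 (-m-1), ← Real.rpow_add (by norm_num)]
        push_cast; norm_num
      calc (1:ℝ) = (2:ℝ) ^ ((m:ℝ)+1) * (2:ℝ) ^ (-m-1) := hm.symm
        _ ≤ (2:ℝ) ^ ((m:ℝ)+1) * dist z b := by
            apply mul_le_mul_of_nonneg_left hz.le (Real.rpow_pos_of_pos (by norm_num) _).le
    nlinarith [hd0]
  have := key_lev hf htheta hlam ha hk01 hk2 hzb hz0b hd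
  have h2 : (k:ℝ) ≤ ⌈(k₀:ℝ) + (theta * (a+1) + Real.logb 2 lam + 1)⌉ := by
    calc (k:ℝ) ≤ (k₀:ℝ) + (theta * (a+1) + Real.logb 2 lam + 1) := this.le
      _ ≤ _ := Int.le_ceil _
  exact_mod_cast h2

/-- F-LB -/
lemma le_phiMap {b z₀ : Z} {m k₀ : ℤ} (hz₀ : (2:ℝ) ^ (-m-1) < dist z₀ b)
    (hk01 : (2:ℝ) ^ (-k₀-1) < dist (f z₀) (f b)) (hk02 : dist (f z₀) (f b) ≤ (2:ℝ) ^ (-k₀)) :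
    k₀ ≤ phiMap (⇑f) b m :=
  le_csSup (phiSet_bddAbove hf htheta hlam hz₀) ⟨z₀, hz₀, hk01, hk02⟩

/-- the sup is attained -/
lemma phiMap_mem {b z₀ : Z} {m : ℤ} (hz₀ : (2:ℝ) ^ (-m-1) < dist z₀ b) :
    phiMap (⇑f) b m ∈ phiSet (⇑f) b m :=
  Int.csSup_mem (phiSet_nonempty hz₀) (phiSet_bddAbove hf htheta hlam hz₀)

/-- F-UB with κ = 0 : if `z₀` is an annulus witness at level `m`, then `φ_b(m)` is at most the
image level of `z₀` plus a constant. -/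
lemma phiMap_le {b z₀ : Z} {m k₀ : ℤ} (hz₀ : (2:ℝ) ^ (-m-1) < dist z₀ b)
    (hz₀' : dist z₀ b ≤ (2:ℝ) ^ (-m))
    (hk01 : (2:ℝ) ^ (-k₀-1) < dist (f z₀) (f b)) :
    (phiMap (⇑f) b m : ℝ) ≤ k₀ + (2*theta + Real.logb 2 lam + 1) := by
  obtain ⟨z, hz, hk1, hk2⟩ := phiMap_mem hf htheta hlam hz₀
  have hzb : z ≠ b := ne_of_dist_gt hz
  have hz0b : z₀ ≠ b := ne_of_dist_gt hz₀
  have hd : dist z₀ b ≤ (2:ℝ) ^ (1:ℝ) * dist z b := by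
    rw [Real.rpow_one]
    have h1 : (2:ℝ) ^ (-m) = 2 * (2:ℝ) ^ (-m-1) := by
      rw [show -m = (-m-1) + 1 by ring, zpow_add₀ (by norm_num : (2:ℝ) ≠ 0)]; ring
    calc dist z₀ b ≤ (2:ℝ) ^ (-m) := hz₀'
      _ = 2 * (2:ℝ) ^ (-m-1) := h1
      _ ≤ 2 * dist z b := by linarith
  have := key_lev hf htheta hlam (by norm_num : (0:ℝ) ≤ 1) hk01 hk2 hzb hz0b hd
  push_cast
  linarith

omit hf htheta hlam in
lemma phiMap_mono {f : Z ≃ₜ W} {b z₀ : Z} {m m' : ℤ}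
    (hmm : m ≤ m') (hz₀ : (2:ℝ) ^ (-m-1) < dist z₀ b)
    (hbdd : BddAbove (phiSet (⇑f) b m')) :
    phiMap (⇑f) b m ≤ phiMap (⇑f) b m' := by
  apply csSup_le_csSup hbdd (phiSet_nonempty hz₀)
  rintro k ⟨z, hz, hk⟩
  refine ⟨z, lt_of_le_of_lt ?_ hz, hk⟩
  apply zpow_le_zpow_right₀ (by norm_num : (1:ℝ) ≤ 2)
  omega

end ctx

lemma mem_spectrum_of {b z : Z} {k : ℤ} (h1 : (2:ℝ) ^ (-k-1) < dist z b)
    (h2 : dist z b ≤ (2:ℝ) ^ (-k)) : k ∈ scaleSpectrum b := ⟨z, h1, h2⟩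

lemma spectrum_witness {b : Z} {m : ℤ} (hm : m ∈ scaleSpectrum b) :
    ∃ z : Z, (2:ℝ) ^ (-m-1) < dist z b ∧ dist z b ≤ (2:ℝ) ^ (-m) := hm

lemma two_zpow_le_rpow_mul {p q r : ℤ} (h : p ≤ q + r) :
    (2:ℝ) ^ p ≤ (2:ℝ) ^ ((q:ℤ):ℝ) * (2:ℝ) ^ r := by
  rw [Real.rpow_intCast, ← zpow_add₀ (by norm_num : (2:ℝ) ≠ 0)]
  exact zpow_le_zpow_right₀ (by norm_num) h

section ctx
variable {theta lam : ℝ} {f : Z ≃ₜ W} (hf : IsPQS theta lam f)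
    (htheta : 1 ≤ theta) (hlam : 1 ≤ lam)
include hf htheta hlam

/-- H1: increments of `φ_b` over the spectrum. -/
lemma phi_incr {b : Z} {m n : ℤ} (hm : m ∈ scaleSpectrum b) (hn : n ∈ scaleSpectrum b)
    (hmn : m ≤ n) :
    (phiMap (⇑f) b n : ℝ) ≤ phiMap (⇑f) b m + theta * ((n:ℝ) - m)
      + (4*theta + 2*Real.logb 2 lam + 2) := by
  obtain ⟨zm, hzm1, hzm2⟩ := spectrum_witness hm
  obtain ⟨zn, hzn1, hzn2⟩ := spectrum_witness hn
  have hzmb := ne_of_dist_gt hzm1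
  have hznb := ne_of_dist_gt hzn1
  obtain ⟨km, hkm1, hkm2⟩ := exists_level (dist_pos.mpr (f.injective.ne hzmb))
  obtain ⟨kn, hkn1, hkn2⟩ := exists_level (dist_pos.mpr (f.injective.ne hznb))
  -- φ(n) ≤ kn + 2θ+L+1
  have h1 : (phiMap (⇑f) b n : ℝ) ≤ kn + (2*theta + Real.logb 2 lam + 1) :=
    phiMap_le hf htheta hlam hzn1 hzn2 hkn1
  -- kn < km + θ(n-m+2)+L+1
  have hd : dist zm b ≤ (2:ℝ) ^ ((n - m + 1 : ℤ) : ℝ) * dist zn b := by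
    calc dist zm b ≤ (2:ℝ) ^ (-m) := hzm2
      _ ≤ (2:ℝ) ^ ((n - m + 1 : ℤ) : ℝ) * (2:ℝ) ^ (-n-1) := two_zpow_le_rpow_mul (by omega)
      _ ≤ (2:ℝ) ^ ((n - m + 1 : ℤ) : ℝ) * dist zn b := by
          apply mul_le_mul_of_nonneg_left hzn1.le (by positivity)
  have ha : (0:ℝ) ≤ ((n - m + 1 : ℤ) : ℝ) := by exact_mod_cast (by omega : (0:ℤ) ≤ n - m + 1)
  have h2 := key_lev hf htheta hlam ha hkm1 hkn2 hznb hzmb hd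
  -- km ≤ φ(m)
  have h3 : (km : ℝ) ≤ (phiMap (⇑f) b m : ℝ) := by
    exact_mod_cast le_phiMap hf htheta hlam hzm1 hkm1 hkm2
  have hth0 : (0:ℝ) < theta := by linarith
  push_cast at h2 ⊢
  nlinarith [h2, h1, h3]

omit hf htheta hlam in
/-- Alignment: an annulus witness at level `m ≤ lam0 - 2` around `x` is also an annulus
witness around `y` at some nearby level. -/
lemma aln {x y : Z} {lam0 m : ℤ}
    (hD2 : dist x y ≤ (2:ℝ) ^ (-lam0))
    (hm : m ∈ scaleSpectrum x) (hmlam : m ≤ lam0 - 2) :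
    ∃ (z : Z) (n : ℤ), ((2:ℝ) ^ (-m-1) < dist z x ∧ dist z x ≤ (2:ℝ) ^ (-m)) ∧
      ((2:ℝ) ^ (-n-1) < dist z y ∧ dist z y ≤ (2:ℝ) ^ (-n)) ∧ m - 1 ≤ n ∧ n ≤ m + 1 := by
  obtain ⟨z, hz1, hz2⟩ := spectrum_witness hm
  have hDm : dist x y ≤ (2:ℝ) ^ (-m-2) := by
    calc dist x y ≤ (2:ℝ) ^ (-lam0) := hD2
      _ ≤ (2:ℝ) ^ (-m-2) := zpow_le_zpow_right₀ (by norm_num) (by omega)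
  have hsplit : (2:ℝ) ^ (-m-1) = (2:ℝ) ^ (-m-2) + (2:ℝ) ^ (-m-2) := by
    rw [show -m-1 = (-m-2) + 1 by ring, zpow_add₀ (by norm_num : (2:ℝ) ≠ 0)]; ring
  have hzyl : (2:ℝ) ^ (-m-2) < dist z y := by
    have := dist_triangle z y x
    have hc : dist y x = dist x y := dist_comm y x
    nlinarith [hz1]
  have hzyu : dist z y < (2:ℝ) ^ (-m+1) := by
    have := dist_triangle z x y
    have hsplit2 : (2:ℝ) ^ (-m+1 : ℤ) = (2:ℝ) ^ (-m) + (2:ℝ) ^ (-m) := by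
      rw [show -m+1 = (-m) + 1 by ring, zpow_add₀ (by norm_num : (2:ℝ) ≠ 0)]; ring
    have h4 : (2:ℝ) ^ (-m-2) ≤ (2:ℝ) ^ (-m:ℤ) := zpow_le_zpow_right₀ (by norm_num) (by omega)
    nlinarith
  obtain ⟨n, hn1, hn2⟩ := exists_level (lt_trans (two_zpow_pos _) hzyl)
  refine ⟨z, n, ⟨hz1, hz2⟩, ⟨hn1, hn2⟩, ?_, ?_⟩
  · -- n ≥ m - 1 from 2^(-n-1) < 2^(-m+1)
    have : (2:ℝ) ^ (-n-1) < (2:ℝ) ^ (-m+1) := lt_of_lt_of_le hn1 hzyu.le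
    have := (zpow_lt_zpow_iff_right₀ (by norm_num : (1:ℝ) < 2)).mp this
    omega
  · -- n ≤ m + 1 from 2^(-m-2) < 2^(-n)
    have : (2:ℝ) ^ (-m-2) < (2:ℝ) ^ (-n) := lt_of_lt_of_le hzyl hn2
    have := (zpow_lt_zpow_iff_right₀ (by norm_num : (1:ℝ) < 2)).mp this
    omega

/-- H2 (one-sided): comparison of `φ_x` and `φ_y` at nearby spectrum levels below `lam0`. -/
lemma phi_cross {x y : Z} {lam0 m n : ℤ}
    (hl1 : (2:ℝ) ^ (-lam0-1) < dist x y) (hl2 : dist x y ≤ (2:ℝ) ^ (-lam0))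
    (hm : m ∈ scaleSpectrum x) (hn : n ∈ scaleSpectrum y)
    (hd1 : m - 3 ≤ n) (hd2 : n ≤ m + 3) (hm0 : m ≤ lam0) (hn0 : n ≤ lam0) :
    (phiMap (⇑f) x m : ℝ) ≤ phiMap (⇑f) y n + (15*theta + 5*Real.logb 2 lam + 5) := by
  set L := Real.logb 2 lam with hLdef
  have hL0 : 0 ≤ L := Real.logb_nonneg (by norm_num) hlam
  have hth0 : (0:ℝ) < theta := by linarith
  have hxy : x ≠ y := ne_of_dist_gt hl1
  have hyx1 : (2:ℝ) ^ (-lam0-1) < dist y x := by rwa [dist_comm]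
  have hyx2 : dist y x ≤ (2:ℝ) ^ (-lam0) := by rwa [dist_comm]
  have hlam0Sx : lam0 ∈ scaleSpectrum x := mem_spectrum_of hyx1 hyx2
  have hlam0Sy : lam0 ∈ scaleSpectrum y := mem_spectrum_of hl1 hl2
  by_cases hcase : m ≤ lam0 - 2
  · -- main case: transfer through a common witness
    obtain ⟨z, n', ⟨hzx1, hzx2⟩, ⟨hzy1, hzy2⟩, hn'1, hn'2⟩ := aln hl2 hm hcase
    have hzx := ne_of_dist_gt hzx1
    have hzy := ne_of_dist_gt hzy1
    obtain ⟨kzx, hkzx1, hkzx2⟩ := exists_level (dist_pos.mpr (f.injective.ne hzx))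
    obtain ⟨kzy, hkzy1, hkzy2⟩ := exists_level (dist_pos.mpr (f.injective.ne hzy))
    have s1 : (phiMap (⇑f) x m : ℝ) ≤ kzx + (2*theta + L + 1) :=
      phiMap_le hf htheta hlam hzx1 hzx2 hkzx1
    -- kzx < kzy + 3θ+L+1 via key_lev with base z
    have hkzy1' : (2:ℝ) ^ (-kzy-1) < dist (f y) (f z) := by rwa [dist_comm] at hkzy1
    have hkzx2' : dist (f x) (f z) ≤ (2:ℝ) ^ (-kzx) := by rwa [dist_comm] at hkzx2
    have hd : dist y z ≤ (2:ℝ) ^ (2:ℝ) * dist x z := by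
      rw [dist_comm y z, dist_comm x z]
      have e1 : dist z y ≤ (2:ℝ) ^ (-n') := hzy2
      have e2 : (2:ℝ) ^ (-n') ≤ (2:ℝ) ^ (-m+1 : ℤ) :=
        zpow_le_zpow_right₀ (by norm_num) (by omega)
      have e4 : (2:ℝ) ^ (2:ℝ) = 4 := by
        have := Real.rpow_natCast (2:ℝ) 2
        norm_num at this; linarith [this]
      have e3 : (2:ℝ) ^ (-m+1 : ℤ) = (2:ℝ) ^ (2:ℝ) * (2:ℝ) ^ (-m-1 : ℤ) := by
        rw [e4, show -m+1 = (-m-1)+2 by ring, zpow_add₀ (by norm_num : (2:ℝ) ≠ 0)]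
        norm_num; ring
      calc dist z y ≤ (2:ℝ) ^ (-m+1 : ℤ) := le_trans e1 e2
        _ = (2:ℝ) ^ (2:ℝ) * (2:ℝ) ^ (-m-1 : ℤ) := e3
        _ ≤ (2:ℝ) ^ (2:ℝ) * dist z x := by
            apply mul_le_mul_of_nonneg_left hzx1.le (by positivity)
    have s2 : (kzx : ℝ) < kzy + (theta * 3 + L + 1) := by
      have := key_lev hf htheta hlam (by norm_num : (0:ℝ) ≤ 2) hkzy1' hkzx2'
        (fun h => hzx (by rw [h])) (fun h => hzy (by rw [h])) hd
      calc (kzx:ℝ) < kzy + (theta * (2+1) + L + 1) := this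
        _ = kzy + (theta * 3 + L + 1) := by ring_nf
    have s3 : (kzy : ℝ) ≤ (phiMap (⇑f) y n' : ℝ) := by
      exact_mod_cast le_phiMap hf htheta hlam hzy1 hkzy1 hkzy2
    have hn'Sy : n' ∈ scaleSpectrum y := mem_spectrum_of hzy1 hzy2
    have s4 : (phiMap (⇑f) y n' : ℝ) ≤ phiMap (⇑f) y n + (4*theta + (4*theta + 2*L + 2)) := by
      rcases le_or_gt n' n with h | h
      · have := phiMap_mono (f := f) h hzy1
          (phiSet_bddAbove hf htheta hlam (spectrum_witness hn).choose_spec.1)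
        have : (phiMap (⇑f) y n' : ℝ) ≤ phiMap (⇑f) y n := by exact_mod_cast this
        nlinarith
      · have := phi_incr hf htheta hlam hn hn'Sy h.le
        have hgap : ((n':ℝ) - n) ≤ 4 := by
          have : n' - n ≤ 4 := by omega
          exact_mod_cast this
        nlinarith
    nlinarith [s1, s2, s3, s4]
  · -- boundary case: go through the anchor level lam0
    obtain ⟨k0, hk01, hk02⟩ := exists_level (dist_pos.mpr (f.injective.ne (Ne.symm hxy)))
    -- k0 : level of dist (f y) (f x)
    have s1 : (phiMap (⇑f) x m : ℝ) ≤ phiMap (⇑f) x lam0 := by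
      exact_mod_cast phiMap_mono (f := f) hm0 (spectrum_witness hm).choose_spec.1
        (phiSet_bddAbove hf htheta hlam (spectrum_witness hlam0Sx).choose_spec.1)
    have s2 : (phiMap (⇑f) x lam0 : ℝ) ≤ k0 + (2*theta + L + 1) :=
      phiMap_le hf htheta hlam hyx1 hyx2 hk01
    have hk01' : (2:ℝ) ^ (-k0-1) < dist (f x) (f y) := by rwa [dist_comm] at hk01
    have hk02' : dist (f x) (f y) ≤ (2:ℝ) ^ (-k0) := by rwa [dist_comm] at hk02
    have s3 : (k0 : ℝ) ≤ (phiMap (⇑f) y lam0 : ℝ) := by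
      exact_mod_cast le_phiMap hf htheta hlam hl1 hk01' hk02'
    have s4 : (phiMap (⇑f) y lam0 : ℝ) ≤ phiMap (⇑f) y n + theta * ((lam0:ℝ) - n)
        + (4*theta + 2*L + 2) := phi_incr hf htheta hlam hn hlam0Sy hn0
    have e2 : ((lam0:ℝ) - n) ≤ 4 := by
      have : lam0 - n ≤ 4 := by omega
      exact_mod_cast this
    have e4 : (0:ℝ) ≤ (lam0:ℝ) - n := by
      have : (0:ℤ) ≤ lam0 - n := by omega
      exact_mod_cast this
    have e5 : theta * ((lam0:ℝ) - n) ≤ theta * 4 := mul_le_mul_of_nonneg_left e2 hth0.le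
    linarith [s1, s2, s3, s4]

end ctx


/-- Structure of the value `Phi l` of a linear extension at an integer `l ≤ lam0 ∈ S_b`. -/
lemma rep {f : Z ≃ₜ W} {b : Z} {Phi : ℝ → ℝ}
    (hPhi : IsLinearExtension (scaleSpectrum b) (phiMap (⇑f) b) Phi)
    {l lam0 : ℤ} (hmem : lam0 ∈ scaleSpectrum b) (hl : l ≤ lam0) :
    (l ∈ scaleSpectrum b ∧ Phi l = phiMap (⇑f) b l)
    ∨ (∃ s₁ s₂ : ℤ, s₁ ∈ scaleSpectrum b ∧ s₂ ∈ scaleSpectrum b ∧ s₁ < l ∧ l < s₂ ∧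
        s₂ ≤ lam0 ∧
        (∀ s ∈ scaleSpectrum b, s ≤ l → s ≤ s₁) ∧ (∀ s ∈ scaleSpectrum b, l ≤ s → s₂ ≤ s) ∧
        Phi l = (1 - ((l:ℝ)-s₁)/((s₂:ℝ)-s₁)) * phiMap (⇑f) b s₁
          + (((l:ℝ)-s₁)/((s₂:ℝ)-s₁)) * phiMap (⇑f) b s₂)
    ∨ (∃ m : ℤ, m ∈ scaleSpectrum b ∧ (∀ s ∈ scaleSpectrum b, m ≤ s) ∧ l < m ∧ m ≤ lam0 ∧
        Phi l = phiMap (⇑f) b m + ((l:ℝ) - m)) := by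
  by_cases h1 : l ∈ scaleSpectrum b
  · exact Or.inl ⟨h1, hPhi.1 l h1⟩
  by_cases h2 : ∃ s, s ∈ scaleSpectrum b ∧ s < l
  · right; left
    obtain ⟨s₁, ⟨hs₁S, hs₁l⟩, hs₁max⟩ :=
      Int.exists_greatest_of_bdd (P := fun s => s ∈ scaleSpectrum b ∧ s < l)
        ⟨l, fun z hz => hz.2.le⟩ h2
    have hllam : l < lam0 := lt_of_le_of_ne hl (fun h => h1 (by rw [h]; exact hmem))
    obtain ⟨s₂, ⟨hs₂S, hs₂l⟩, hs₂min⟩ :=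
      Int.exists_least_of_bdd (P := fun s => s ∈ scaleSpectrum b ∧ l < s)
        ⟨l, fun z hz => hz.2.le⟩ ⟨lam0, hmem, hllam⟩
    have hmax' : ∀ s ∈ scaleSpectrum b, s ≤ l → s ≤ s₁ := by
      intro s hs hsl
      exact hs₁max s ⟨hs, lt_of_le_of_ne hsl (fun h => h1 (by rw [← h]; exact hs))⟩
    have hmin' : ∀ s ∈ scaleSpectrum b, l ≤ s → s₂ ≤ s := by
      intro s hs hsl
      exact hs₂min s ⟨hs, lt_of_le_of_ne hsl (fun h => h1 (by rw [h]; exact hs))⟩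
    have hgap : ∀ s ∈ scaleSpectrum b, s ≤ s₁ ∨ s₂ ≤ s := by
      intro s hs
      rcases le_or_gt s l with h | h
      · exact Or.inl (hmax' s hs h)
      · exact Or.inr (hmin' s hs h.le)
    have hs12 : s₁ < s₂ := hs₁l.trans hs₂l
    have hden : (0:ℝ) < (s₂:ℝ) - s₁ := by
      have : (s₁:ℝ) < s₂ := by exact_mod_cast hs12
      linarith
    set μ : ℝ := ((l:ℝ)-s₁)/((s₂:ℝ)-s₁) with hμdef
    have hs1l' : (s₁:ℝ) < (l:ℝ) := by exact_mod_cast hs₁l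
    have hls2' : (l:ℝ) < (s₂:ℝ) := by exact_mod_cast hs₂l
    have hμmem : μ ∈ Set.Icc (0:ℝ) 1 := by
      constructor
      · apply div_nonneg (by linarith) hden.le
      · rw [div_le_one hden]; linarith
    have hpoint : (1-μ) * (s₁:ℝ) + μ * (s₂:ℝ) = (l:ℝ) := by
      rw [hμdef]; field_simp; ring
    have := hPhi.2.1 s₁ hs₁S s₂ hs₂S hs12 hgap μ hμmem
    rw [hpoint] at this
    exact ⟨s₁, s₂, hs₁S, hs₂S, hs₁l, hs₂l, hs₂min lam0 ⟨hmem, hllam⟩, hmax', hmin', this⟩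
  · right; right
    push_neg at h2
    obtain ⟨m, hmS, hmmin⟩ :=
      Int.exists_least_of_bdd (P := fun s => s ∈ scaleSpectrum b)
        ⟨l, fun z hz => h2 z hz⟩ ⟨lam0, hmem⟩
    have hlm : l < m := by
      exact lt_of_le_of_ne (h2 m hmS) (fun h => h1 (by rw [h]; exact hmS))
    have hval := hPhi.2.2.2 m hmS hmmin (l:ℝ) (by exact_mod_cast hlm.le)
    exact ⟨m, hmS, hmmin, hlm, hmmin lam0 hmem, hval⟩

/-- Pure arithmetic: bounds on the linear interpolation value. -/
lemma interp_bounds {t₁ t₂ l b₁ b₂ K : ℝ} (h1 : t₁ ≤ l) (h2 : l ≤ t₂) (hg : 1 ≤ t₂ - t₁)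
    (hbb : 0 ≤ b₂ - b₁) (hbK : b₂ - b₁ ≤ K * (t₂ - t₁)) (hK0 : 0 ≤ K) :
    b₁ ≤ (1-(l-t₁)/(t₂-t₁))*b₁ + ((l-t₁)/(t₂-t₁))*b₂ ∧
    b₂ - K*(t₂ - l) ≤ (1-(l-t₁)/(t₂-t₁))*b₁ + ((l-t₁)/(t₂-t₁))*b₂ ∧
    (1-(l-t₁)/(t₂-t₁))*b₁ + ((l-t₁)/(t₂-t₁))*b₂ ≤ b₁ + K*(l - t₁) ∧
    (1-(l-t₁)/(t₂-t₁))*b₁ + ((l-t₁)/(t₂-t₁))*b₂ ≤ b₂ := by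
  have hg0 : 0 < t₂ - t₁ := by linarith
  set ν : ℝ := (l-t₁)/(t₂-t₁) with hν
  have hν0 : 0 ≤ ν := div_nonneg (by linarith) hg0.le
  have hν1 : ν ≤ 1 := by rw [hν, div_le_one hg0]; linarith
  have hνg : ν * (t₂ - t₁) = l - t₁ := by rw [hν]; field_simp
  have e : (1-ν)*(t₂-t₁) = t₂ - l := by linear_combination -hνg
  have id1 : (1-ν)*b₁ + ν*b₂ - b₁ = ν*(b₂ - b₁) := by ring
  have id2 : b₂ - ((1-ν)*b₁ + ν*b₂) = (1-ν)*(b₂-b₁) := by ring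
  have p1 : 0 ≤ ν*(b₂-b₁) := mul_nonneg hν0 hbb
  have p2 : 0 ≤ (1-ν)*(b₂-b₁) := mul_nonneg (by linarith) hbb
  refine ⟨by linarith, ?_, ?_, by linarith⟩
  · have m1 : (1-ν)*(b₂-b₁) ≤ (1-ν)*(K*(t₂-t₁)) :=
      mul_le_mul_of_nonneg_left hbK (by linarith)
    have m2 : (1-ν)*(K*(t₂-t₁)) = K*(t₂-l) := by rw [← e]; ring
    linarith
  · have m1 : ν*(b₂-b₁) ≤ ν*(K*(t₂-t₁)) := mul_le_mul_of_nonneg_left hbK hν0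
    have m2 : ν*(K*(t₂-t₁)) = K*(l-t₁) := by rw [← hνg]; ring
    linarith

/-- Pure arithmetic: comparison of two interpolations with aligned endpoints. -/
lemma interp_cmp {s₁ s₂ t₁ t₂ l a₁ a₂ b₁ b₂ K c : ℝ}
    (hs1 : s₁ < l) (hs2 : l < s₂) (ht1 : t₁ ≤ l) (ht2 : l ≤ t₂) (hg' : 1 ≤ t₂ - t₁)
    (ha1 : a₁ - b₁ ≤ c) (ha2 : a₂ - b₂ ≤ c)
    (hbb : 0 ≤ b₂ - b₁) (hbK : b₂ - b₁ ≤ K*(t₂-t₁)) (hK0 : 0 ≤ K)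
    (e1 : |t₁ - s₁| ≤ 1) (e2 : |t₂ - s₂| ≤ 1) :
    ((1-(l-s₁)/(s₂-s₁))*a₁ + ((l-s₁)/(s₂-s₁))*a₂)
      - ((1-(l-t₁)/(t₂-t₁))*b₁ + ((l-t₁)/(t₂-t₁))*b₂) ≤ c + K := by
  have hg0 : 0 < s₂ - s₁ := by linarith
  have hg0' : 0 < t₂ - t₁ := by linarith
  set μ : ℝ := (l-s₁)/(s₂-s₁) with hμ
  set ν : ℝ := (l-t₁)/(t₂-t₁) with hν
  have hμg : μ * (s₂ - s₁) = l - s₁ := by rw [hμ]; field_simp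
  have hνg : ν * (t₂ - t₁) = l - t₁ := by rw [hν]; field_simp
  have hμ0 : 0 ≤ μ := div_nonneg (by linarith) hg0.le
  have hμ1 : μ ≤ 1 := by rw [hμ, div_le_one hg0]; linarith
  have hν0 : 0 ≤ ν := div_nonneg (by linarith) hg0'.le
  have hν1 : ν ≤ 1 := by rw [hν, div_le_one hg0']; linarith
  obtain ⟨e1a, e1b⟩ := abs_le.mp e1
  obtain ⟨e2a, e2b⟩ := abs_le.mp e2
  have hkey : (μ - ν)*(t₂ - t₁) = μ*(t₂-s₂) + (1-μ)*(t₁-s₁) := by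
    linear_combination hμg - hνg
  have hbound : (μ - ν)*(t₂ - t₁) ≤ 1 := by
    have q1 : μ*(t₂-s₂) ≤ μ*1 := mul_le_mul_of_nonneg_left e2b hμ0
    have q2 : (1-μ)*(t₁-s₁) ≤ (1-μ)*1 := mul_le_mul_of_nonneg_left e1b (by linarith)
    linarith
  have hfinal : (μ - ν)*(b₂ - b₁) ≤ K := by
    rcases le_or_gt μ ν with h | h
    · have := mul_nonpos_of_nonpos_of_nonneg (by linarith : μ - ν ≤ 0) hbb
      linarith
    · have m1 : (μ-ν)*(b₂-b₁) ≤ (μ-ν)*(K*(t₂-t₁)) :=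
        mul_le_mul_of_nonneg_left hbK (by linarith)
      have m2 : (μ-ν)*(K*(t₂-t₁)) = K*((μ-ν)*(t₂-t₁)) := by ring
      have m3 : K*((μ-ν)*(t₂-t₁)) ≤ K*1 := mul_le_mul_of_nonneg_left hbound hK0
      linarith
  have hid : ((1-μ)*a₁ + μ*a₂) - ((1-ν)*b₁ + ν*b₂)
      = (1-μ)*(a₁-b₁) + μ*(a₂-b₂) + (μ-ν)*(b₂-b₁) := by ring
  have q1 : (1-μ)*(a₁-b₁) ≤ (1-μ)*c := mul_le_mul_of_nonneg_left ha1 (by linarith)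
  have q2 : μ*(a₂-b₂) ≤ μ*c := mul_le_mul_of_nonneg_left ha2 hμ0
  linarith

section core
variable {theta lam : ℝ} {f : Z ≃ₜ W} (hf : IsPQS theta lam ⇑f)
    (htheta : 1 ≤ theta) (hlam : 1 ≤ lam)
include hf htheta hlam

/-- One-sided comparison of the two linear extensions. -/
lemma core {x y : Z} {Phix Phiy : ℝ → ℝ}
    (hPx : IsLinearExtension (scaleSpectrum x) (phiMap (⇑f) x) Phix)
    (hPy : IsLinearExtension (scaleSpectrum y) (phiMap (⇑f) y) Phiy)
    {l lam0 : ℤ}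
    (hl1 : (2:ℝ) ^ (-lam0-1) < dist x y) (hl2 : dist x y ≤ (2:ℝ) ^ (-lam0))
    (hl : l ≤ lam0) :
    Phix l - Phiy l ≤ 50*(theta + Real.logb 2 lam + 1) := by
  obtain ⟨L, hLdef⟩ : ∃ L : ℝ, L = Real.logb 2 lam := ⟨_, rfl⟩
  have hL0 : 0 ≤ L := hLdef ▸ Real.logb_nonneg (by norm_num) hlam
  have hth0 : (0:ℝ) < theta := by linarith
  obtain ⟨c1, hc1⟩ : ∃ c : ℝ, c = 4*theta + 2*L + 2 := ⟨_, rfl⟩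
  obtain ⟨c2, hc2⟩ : ∃ c : ℝ, c = 15*theta + 5*L + 5 := ⟨_, rfl⟩
  obtain ⟨K, hK⟩ : ∃ k : ℝ, k = theta + c1 := ⟨_, rfl⟩
  have hc20 : 0 ≤ c2 := by rw [hc2]; linarith
  have hK0 : 0 ≤ K := by rw [hK, hc1]; linarith
  have hxy : x ≠ y := ne_of_dist_gt hl1
  have hyx1 : (2:ℝ) ^ (-lam0-1) < dist y x := by rwa [dist_comm]
  have hyx2 : dist y x ≤ (2:ℝ) ^ (-lam0) := by rwa [dist_comm]
  have hSx : lam0 ∈ scaleSpectrum x := mem_spectrum_of hyx1 hyx2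
  have hSy : lam0 ∈ scaleSpectrum y := mem_spectrum_of hl1 hl2
  -- alignment helpers
  have halnxy : ∀ m : ℤ, m ∈ scaleSpectrum x → m ≤ lam0 - 2 →
      ∃ n, n ∈ scaleSpectrum y ∧ m - 1 ≤ n ∧ n ≤ m + 1 := by
    intro m hm hc
    obtain ⟨z, n, _, hw, h1, h2⟩ := aln hl2 hm hc
    exact ⟨n, mem_spectrum_of hw.1 hw.2, h1, h2⟩
  have halnyx : ∀ m : ℤ, m ∈ scaleSpectrum y → m ≤ lam0 - 2 →
      ∃ n, n ∈ scaleSpectrum x ∧ m - 1 ≤ n ∧ n ≤ m + 1 := by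
    intro m hm hc
    obtain ⟨z, n, _, hw, h1, h2⟩ := aln hyx2 hm hc
    exact ⟨n, mem_spectrum_of hw.1 hw.2, h1, h2⟩
  -- monotonicity helper
  have hmono : ∀ (b : Z) (m n : ℤ), m ≤ n → m ∈ scaleSpectrum b → n ∈ scaleSpectrum b →
      (phiMap (⇑f) b m : ℝ) ≤ (phiMap (⇑f) b n : ℝ) := by
    intro b m n h hm hn
    exact_mod_cast phiMap_mono (f := f) h (spectrum_witness hm).choose_spec.1
      (phiSet_bddAbove hf htheta hlam (spectrum_witness hn).choose_spec.1)
  -- slope helper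
  have hslope : ∀ (b : Z) (m n : ℤ), m < n → m ∈ scaleSpectrum b → n ∈ scaleSpectrum b →
      (phiMap (⇑f) b n : ℝ) - (phiMap (⇑f) b m : ℝ) ≤ K * ((n:ℝ) - m) := by
    intro b m n h hm hn
    have h1 := phi_incr hf htheta hlam hm hn h.le
    have hge : (1:ℝ) ≤ (n:ℝ) - m := by
      have : (1:ℤ) ≤ n - m := by omega
      exact_mod_cast this
    have h2 : c1 * 1 ≤ c1 * ((n:ℝ) - m) :=
      mul_le_mul_of_nonneg_left hge (by rw [hc1]; linarith)
    rw [hK]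
    rw [hc1, hLdef] at h2 ⊢
    rw [hLdef] at *
    nlinarith
  -- cross comparison helper
  have hcross : ∀ m n : ℤ, m ∈ scaleSpectrum x → n ∈ scaleSpectrum y →
      m - 3 ≤ n → n ≤ m + 3 → m ≤ lam0 → n ≤ lam0 →
      (phiMap (⇑f) x m : ℝ) - (phiMap (⇑f) y n : ℝ) ≤ c2 := by
    intro m n hm hn h1 h2 h3 h4
    have := phi_cross hf htheta hlam hl1 hl2 hm hn h1 h2 h3 h4
    rw [hc2, hLdef]; linarith
  have goalC : c2 + K + 1 ≤ 50*(theta + Real.logb 2 lam + 1) := by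
    rw [hc2, hK, hc1, hLdef]; linarith [Real.logb_nonneg (by norm_num : (1:ℝ) < 2) hlam, hth0]
  rcases rep hPx hSx hl with ⟨hx1, hPxv⟩ |
    ⟨s₁, s₂, hs₁S, hs₂S, hs₁l, hls₂, hs₂lam, hs₁max, hs₂min, hPxv⟩ |
    ⟨mx, hmxS, hmxmin, hlmx, hmxlam, hPxv⟩ <;>
  rcases rep hPy hSy hl with ⟨hy1, hPyv⟩ |
    ⟨t₁, t₂, ht₁S, ht₂S, ht₁l, hlt₂, ht₂lam, ht₁max, ht₂min, hPyv⟩ |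
    ⟨my, hmyS, hmymin, hlmy, hmylam, hPyv⟩
  -- case 11
  · rw [hPxv, hPyv]
    have := hcross l l hx1 hy1 (by omega) (by omega) hl hl
    linarith
  -- case 12
  · rw [hPxv, hPyv]
    have hnear : t₁ = l - 1 ∨ t₂ = l + 1 := by
      by_cases hc : l ≤ lam0 - 2
      · obtain ⟨n, hnS, hn1, hn2⟩ := halnxy l hx1 hc
        rcases lt_trichotomy n l with h | h | h
        · left; have := ht₁max n hnS h.le; omega
        · have := ht₁max n hnS h.le; omega
        · right; have := ht₂min n hnS h.le; omega
      · right; omega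
    have hcast1 : ((t₁:ℝ)) ≤ l := by exact_mod_cast ht₁l.le
    have hcast2 : ((l:ℝ)) ≤ t₂ := by exact_mod_cast hlt₂.le
    have hcastg : (1:ℝ) ≤ (t₂:ℝ) - t₁ := by
      have : (1:ℤ) ≤ t₂ - t₁ := by omega
      exact_mod_cast this
    have hbb : (0:ℝ) ≤ (phiMap (⇑f) y t₂ : ℝ) - (phiMap (⇑f) y t₁ : ℝ) := by
      have := hmono y t₁ t₂ (by omega) ht₁S ht₂S; linarith
    have hbK := hslope y t₁ t₂ (by omega) ht₁S ht₂S
    obtain ⟨ib1, ib2, ib3, ib4⟩ := interp_bounds hcast1 hcast2 hcastg hbb hbK hK0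
    rcases hnear with h | h
    · have := hcross l t₁ hx1 ht₁S (by omega) (by omega) hl (by omega)
      linarith
    · have := hcross l t₂ hx1 ht₂S (by omega) (by omega) hl ht₂lam
      have e : (t₂:ℝ) - l = 1 := by
        have h' : t₂ - l = 1 := by omega
        exact_mod_cast h'
      have e2 : K * ((t₂:ℝ) - l) = K := by rw [e]; ring
      linarith [ib2, this, e2, goalC]
  -- case 13
  · rw [hPxv, hPyv]
    have hmy : my = l + 1 := by
      by_cases hc : l ≤ lam0 - 2
      · obtain ⟨n, hnS, hn1, hn2⟩ := halnxy l hx1 hc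
        have := hmymin n hnS; omega
      · omega
    have := hcross l my hx1 hmyS (by omega) (by omega) hl hmylam
    have e : ((l:ℝ) - my) = -1 := by
      rw [hmy]; push_cast; ring
    rw [e]; linarith
  -- case 21
  · rw [hPxv, hPyv]
    have hnear : s₁ = l - 1 ∨ s₂ = l + 1 := by
      by_cases hc : l ≤ lam0 - 2
      · obtain ⟨n, hnS, hn1, hn2⟩ := halnyx l hy1 hc
        rcases lt_trichotomy n l with h | h | h
        · left; have := hs₁max n hnS h.le; omega
        · have := hs₁max n hnS h.le; omega
        · right; have := hs₂min n hnS h.le; omega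
      · right; omega
    have hcast1 : ((s₁:ℝ)) ≤ l := by exact_mod_cast hs₁l.le
    have hcast2 : ((l:ℝ)) ≤ s₂ := by exact_mod_cast hls₂.le
    have hcastg : (1:ℝ) ≤ (s₂:ℝ) - s₁ := by
      have : (1:ℤ) ≤ s₂ - s₁ := by omega
      exact_mod_cast this
    have hbb : (0:ℝ) ≤ (phiMap (⇑f) x s₂ : ℝ) - (phiMap (⇑f) x s₁ : ℝ) := by
      have := hmono x s₁ s₂ (by omega) hs₁S hs₂S; linarith
    have hbK := hslope x s₁ s₂ (by omega) hs₁S hs₂S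
    obtain ⟨ib1, ib2, ib3, ib4⟩ := interp_bounds hcast1 hcast2 hcastg hbb hbK hK0
    rcases hnear with h | h
    · have := hcross s₁ l hs₁S hy1 (by omega) (by omega) (by omega) hl
      have e : ((l:ℝ) - s₁) = 1 := by
        have h' : l - s₁ = 1 := by omega
        exact_mod_cast h'
      have e3 : K * ((l:ℝ) - s₁) = K := by rw [e]; ring
      linarith [ib3, this, e3, goalC]
    · have := hcross s₂ l hs₂S hy1 (by omega) (by omega) hs₂lam hl
      linarith
  -- case 22
  · rw [hPxv, hPyv]
    have tA : s₁ - 1 ≤ t₁ := by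
      obtain ⟨n, hnS, hn1, hn2⟩ := halnxy s₁ hs₁S (by omega)
      have := ht₁max n hnS (by omega); omega
    have tB : t₁ - 1 ≤ s₁ := by
      obtain ⟨n, hnS, hn1, hn2⟩ := halnyx t₁ ht₁S (by omega)
      have := hs₁max n hnS (by omega); omega
    have tC : t₂ ≤ s₂ + 1 := by
      by_cases hc : s₂ ≤ lam0 - 2
      · obtain ⟨n, hnS, hn1, hn2⟩ := halnxy s₂ hs₂S hc
        have := ht₂min n hnS (by omega); omega
      · omega
    have tD : s₂ ≤ t₂ + 1 := by
      by_cases hc : t₂ ≤ lam0 - 2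
      · obtain ⟨n, hnS, hn1, hn2⟩ := halnyx t₂ ht₂S hc
        have := hs₂min n hnS (by omega); omega
      · omega
    have ha1 : (phiMap (⇑f) x s₁ : ℝ) - (phiMap (⇑f) y t₁ : ℝ) ≤ c2 :=
      hcross s₁ t₁ hs₁S ht₁S (by omega) (by omega) (by omega) (by omega)
    have ha2 : (phiMap (⇑f) x s₂ : ℝ) - (phiMap (⇑f) y t₂ : ℝ) ≤ c2 :=
      hcross s₂ t₂ hs₂S ht₂S (by omega) (by omega) hs₂lam ht₂lam
    have hbb : (0:ℝ) ≤ (phiMap (⇑f) y t₂ : ℝ) - (phiMap (⇑f) y t₁ : ℝ) := by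
      have := hmono y t₁ t₂ (by omega) ht₁S ht₂S; linarith
    have hbK := hslope y t₁ t₂ (by omega) ht₁S ht₂S
    have e1 : |(t₁:ℝ) - s₁| ≤ 1 := by
      rw [abs_le]
      constructor <;> [skip; skip] <;>
        · push_cast
          have h1 : (s₁:ℝ) - 1 ≤ t₁ := by exact_mod_cast tA
          have h2 : (t₁:ℝ) - 1 ≤ s₁ := by exact_mod_cast tB
          linarith
    have e2 : |(t₂:ℝ) - s₂| ≤ 1 := by
      rw [abs_le]
      have h1 : (t₂:ℝ) ≤ (s₂:ℝ) + 1 := by exact_mod_cast tC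
      have h2 : (s₂:ℝ) ≤ (t₂:ℝ) + 1 := by exact_mod_cast tD
      constructor <;> linarith
    have hs1r : (s₁:ℝ) < l := by exact_mod_cast hs₁l
    have hs2r : (l:ℝ) < s₂ := by exact_mod_cast hls₂
    have ht1r : (t₁:ℝ) ≤ l := by exact_mod_cast ht₁l.le
    have ht2r : (l:ℝ) ≤ t₂ := by exact_mod_cast hlt₂.le
    have hgr : (1:ℝ) ≤ (t₂:ℝ) - t₁ := by
      have : (1:ℤ) ≤ t₂ - t₁ := by omega
      exact_mod_cast this
    have := interp_cmp hs1r hs2r ht1r ht2r hgr ha1 ha2 hbb hbK hK0 e1 e2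
    linarith
  -- case 23 : impossible
  · exfalso
    obtain ⟨n, hnS, hn1, hn2⟩ := halnxy s₁ hs₁S (by omega)
    have := hmymin n hnS; omega
  -- case 31
  · rw [hPxv, hPyv]
    have hmx : mx = l + 1 := by
      by_cases hc : l ≤ lam0 - 2
      · obtain ⟨n, hnS, hn1, hn2⟩ := halnyx l hy1 hc
        have := hmxmin n hnS; omega
      · omega
    have := hcross mx l hmxS hy1 (by omega) (by omega) hmxlam hl
    have e : ((l:ℝ) - mx) = -1 := by rw [hmx]; push_cast; ring
    rw [e]; linarith
  -- case 32 : impossible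
  · exfalso
    obtain ⟨n, hnS, hn1, hn2⟩ := halnyx t₁ ht₁S (by omega)
    have := hmxmin n hnS; omega
  -- case 33
  · rw [hPxv, hPyv]
    have tE : mx ≤ my + 1 := by
      by_cases hc : my ≤ lam0 - 2
      · obtain ⟨n, hnS, hn1, hn2⟩ := halnyx my hmyS hc
        have := hmxmin n hnS; omega
      · omega
    have tF : my ≤ mx + 1 := by
      by_cases hc : mx ≤ lam0 - 2
      · obtain ⟨n, hnS, hn1, hn2⟩ := halnxy mx hmxS hc
        have := hmymin n hnS; omega
      · omega
    have := hcross mx my hmxS hmyS (by omega) (by omega) hmxlam hmylam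
    have e : ((my:ℝ) - mx) ≤ 1 := by
      have : my - mx ≤ 1 := by omega
      exact_mod_cast this
    linarith

end core


end Stmt14

/-- for `l ∈ S_x ∪ S_y` with `l < log₂(1/d_Z(x,y))`,
`|Φ_x(l) − Φ_y(l)| ≤ C(θ,λ)`. -/
theorem stmt14 (theta lam : ℝ) (htheta : 1 ≤ theta) (hlam : 1 ≤ lam) :
    ∃ C : ℝ, 0 ≤ C ∧
      ∀ (Z : Type u) (W : Type v) [MetricSpace Z] [MetricSpace W],
        AtLeastThree Z → AtLeastThree W →
        ∀ (f : Z ≃ₜ W), IsPQS theta lam f →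
        ∀ (x y : Z), x ≠ y →
        ∀ Phix Phiy : ℝ → ℝ,
          IsLinearExtension (scaleSpectrum x) (phiMap f x) Phix →
          IsLinearExtension (scaleSpectrum y) (phiMap f y) Phiy →
          ∀ l : ℤ, l ∈ scaleSpectrum x ∪ scaleSpectrum y →
            (l : ℝ) < Real.logb 2 (1 / dist x y) →
            |Phix (l : ℝ) - Phiy (l : ℝ)| ≤ C := by
  classical
  refine ⟨50*(theta + Real.logb 2 lam + 1), ?_, ?_⟩
  · have := Real.logb_nonneg (by norm_num : (1:ℝ) < 2) hlam
    linarith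
  · intro Z W _ _ _ _ f hf x y hxy Phix Phiy hPx hPy l _ hlog
    have hD : 0 < dist x y := dist_pos.mpr hxy
    obtain ⟨lam0, hl1, hl2⟩ := Stmt14.exists_level hD
    have hle : l ≤ lam0 := by
      have hB : (2:ℝ) ^ ((l:ℝ)) < 1 / dist x y :=
        (Real.lt_logb_iff_rpow_lt (by norm_num) (by positivity)).mp hlog
      have hA : (2:ℝ) ^ (((-lam0-1 : ℤ)):ℝ) < dist x y := by
        rw [Real.rpow_intCast]; exact_mod_cast hl1
      have hmul : (2:ℝ) ^ (((-lam0-1:ℤ)):ℝ) * (2:ℝ) ^ ((l:ℝ)) < 1 := by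
        have h1 : (2:ℝ) ^ (((-lam0-1:ℤ)):ℝ) * (2:ℝ) ^ ((l:ℝ)) < dist x y * (1/dist x y) :=
          mul_lt_mul'' hA hB (by positivity) (by positivity)
        rwa [mul_one_div, div_self (ne_of_gt hD)] at h1
      rw [← Real.rpow_add (by norm_num)] at hmul
      have hlt : ((-lam0-1:ℤ):ℝ) + l < 0 := by
        have h0 : (2:ℝ) ^ (((-lam0-1:ℤ):ℝ) + l) < (2:ℝ) ^ (0:ℝ) := by
          rwa [Real.rpow_zero]
        exact (Real.rpow_lt_rpow_left_iff (by norm_num)).mp h0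
      push_cast at hlt
      have h2 : (l:ℝ) < (lam0:ℝ) + 1 := by linarith
      have h3 : l < lam0 + 1 := by exact_mod_cast h2
      omega
    have hyx1 : (2:ℝ) ^ (-lam0-1) < dist y x := by rwa [dist_comm]
    have hyx2 : dist y x ≤ (2:ℝ) ^ (-lam0) := by rwa [dist_comm]
    rw [abs_sub_le_iff]
    exact ⟨Stmt14.core hf htheta hlam hPx hPy hl1 hl2 hle,
           Stmt14.core hf htheta hlam hPy hPx hyx1 hyx2 hle⟩
end
end

section
/- Let f be a (θ,λ)-power quasi-symmetry with extended scale functions Φ_x. For distinct x, y ∈ Z and any t ≥ d_Z(x,y), |Φ_x(log₂(1/t)) − Φ_y(log₂(1/t))| ≤ C(θ,λ). -/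
noncomputable section

universe u v

/-!
The scale maps `φ_x` are nondecreasing and quasi-symmetry bounds their growth, so each extension
`Φ_x` is nondecreasing and `K`-Lipschitz with `K = 2θ + log₂ λ + 1`. At a scale `j ∈ S_x` coarser
than `d(x,y)`, the point realising `φ_x(j)`, or `x` itself, is far from `y`; this gives
`φ_x(j) ≤ φ_y(j+1) + K` and hence `Φ_x(j) ≤ Φ_y(j) + 2K`. If `s = log₂(1/t)` lies within `2` of
such a `j`, the Lipschitz bound finishes the proof. Otherwise `s` lies deep inside a gap, or the
lower tail, of `S_x`. At these scales the spectra of `x` and `y` agree up to `±1`, so `S_y` has a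
matching gap, both extensions are affine across it, and the affine function `Φ_x - Φ_y` is bounded
at `s` by its values next to the endpoints of the gap.
-/

open Set Function

lemma Int.exists_greatest_le {S : Set ℤ} {a : ℝ} (h : ∃ l ∈ S, (l : ℝ) ≤ a) :
    ∃ p ∈ S, (p : ℝ) ≤ a ∧ ∀ l ∈ S, (l : ℝ) ≤ a → l ≤ p := by
  obtain ⟨p, ⟨hpS, hpa⟩, hmax⟩ := Int.exists_greatest_of_bdd (P := fun l => l ∈ S ∧ (l : ℝ) ≤ a)
    ⟨⌊a⌋, fun l hl => Int.le_floor.2 hl.2⟩ (by simpa only [exists_prop] using h)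
  exact ⟨p, hpS, hpa, fun l hl hla => hmax l ⟨hl, hla⟩⟩

lemma Int.exists_least_ge {S : Set ℤ} {a : ℝ} (h : ∃ l ∈ S, a ≤ l) :
    ∃ q ∈ S, a ≤ q ∧ ∀ l ∈ S, a ≤ l → q ≤ l := by
  obtain ⟨q, ⟨hqS, haq⟩, hmin⟩ := Int.exists_least_of_bdd (P := fun l => l ∈ S ∧ a ≤ (l : ℝ))
    ⟨⌈a⌉, fun l hl => Int.ceil_le.2 hl.2⟩ (by simpa only [exists_prop] using h)
  exact ⟨q, hqS, haq, fun l hl hal => hmin l ⟨hl, hal⟩⟩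

lemma monotone_of_monotoneOn_Icc_int {α : Type*} [Preorder α] {g : ℝ → α}
    (h : ∀ n : ℤ, MonotoneOn g (Icc n (n + 1))) : Monotone g := by
  have hcell (t : ℝ) : t ∈ Icc (⌊t⌋ : ℝ) (⌊t⌋ + 1) :=
    ⟨Int.floor_le t, (Int.lt_floor_add_one t).le⟩
  have hleft (n : ℤ) : (n : ℝ) ∈ Icc (n : ℝ) (n + 1) := ⟨le_rfl, by linarith⟩
  have hright (n : ℤ) : ((n + 1 : ℤ) : ℝ) ∈ Icc (n : ℝ) (n + 1) := by
    push_cast; exact ⟨by linarith, le_rfl⟩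
  have hint : Monotone fun n : ℤ => g n :=
    monotone_int_of_le_succ fun n => h n (hleft n) (hright n) (by push_cast; linarith)
  intro t t' htt'
  rcases (Int.floor_mono htt').eq_or_lt with heq | hlt
  · exact h ⌊t⌋ (hcell t) (heq ▸ hcell t') htt'
  · calc g t ≤ g ((⌊t⌋ + 1 : ℤ) : ℝ) := h ⌊t⌋ (hcell t) (hright _) (by
          push_cast; exact (hcell t).2)
      _ ≤ g ⌊t'⌋ := hint (by omega)
      _ ≤ g t' := h ⌊t'⌋ (hleft _) (hcell t') (Int.floor_le t')

lemma sub_le_max_of_eqOn_affine {g h : ℝ → ℝ} {α β α' β' a b s : ℝ}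
    (hg : EqOn g (fun t => α * t + β) (Icc a b)) (hh : EqOn h (fun t => α' * t + β') (Icc a b))
    (hs : s ∈ Icc a b) : g s - h s ≤ max (g a - h a) (g b - h b) := by
  have hab : a ≤ b := hs.1.trans hs.2
  rw [hg hs, hh hs, hg (left_mem_Icc.2 hab), hh (left_mem_Icc.2 hab),
    hg (right_mem_Icc.2 hab), hh (right_mem_Icc.2 hab)]
  rcases le_total 0 (α - α') with hα | hα
  · exact le_max_of_le_right (by nlinarith [hs.2])
  · exact le_max_of_le_left (by nlinarith [hs.1])

lemma sub_le_sub_add_mul_abs {g h : ℝ → ℝ} {K : ℝ}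
    (hg : Monotone g) (hg' : Monotone fun t => K * t - g t)
    (hh : Monotone h) (hh' : Monotone fun t => K * t - h t) (s j : ℝ) :
    g s - h s ≤ g j - h j + K * |s - j| := by
  rcases le_total j s with hjs | hsj
  · have := hg' hjs; have := hh hjs
    rw [abs_of_nonneg (sub_nonneg.2 hjs)]; linarith
  · have := hg hsj; have := hh' hsj
    rw [abs_of_nonpos (sub_nonpos.2 hsj)]; linarith

namespace IsLinearExtension

variable {S : Set ℤ} {φ : ℤ → ℤ} {Φ : ℝ → ℝ}

lemma exists_eqOn_affine (hΦ : IsLinearExtension S φ Φ) (hS : S.Nonempty) {a b : ℝ} (hab : a < b)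
    (hgap : ∀ l ∈ S, (l : ℝ) ≤ a ∨ b ≤ l) :
    ∃ α β : ℝ, (α = 1 ∨ ∃ p ∈ S, ∃ q ∈ S, p < q ∧ α = ((φ q : ℝ) - φ p) / (q - p)) ∧
      EqOn Φ (fun t => α * t + β) (Icc a b) := by
  by_cases hP : ∃ l ∈ S, (l : ℝ) ≤ a
  · obtain ⟨p, hpS, hpa, hpmax⟩ := Int.exists_greatest_le hP
    by_cases hQ : ∃ l ∈ S, b ≤ (l : ℝ)
    · obtain ⟨q, hqS, hbq, hqmin⟩ := Int.exists_least_ge hQ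
      have hpq' : (p : ℝ) < q := by linarith
      have hpq : p < q := by exact_mod_cast hpq'
      have hgap' : ∀ l ∈ S, l ≤ p ∨ q ≤ l := fun l hl =>
        (hgap l hl).imp (hpmax l hl) (hqmin l hl)
      refine ⟨((φ q : ℝ) - φ p) / (q - p), φ p - ((φ q : ℝ) - φ p) / (q - p) * p,
        Or.inr ⟨p, hpS, q, hqS, hpq, rfl⟩, fun t ht => ?_⟩
      have hne : (q : ℝ) - p ≠ 0 := by linarith
      have hμ : (t - p) / (q - p) ∈ Icc (0 : ℝ) 1 :=
        ⟨div_nonneg (by linarith [ht.1]) (by linarith),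
          (div_le_one (by linarith)).2 (by linarith [ht.2])⟩
      have := hΦ.2.1 p hpS q hqS hpq hgap' _ hμ
      rw [show (1 - (t - p) / (q - p)) * (p : ℝ) + (t - p) / (q - p) * q = t by
        field_simp; ring] at this
      rw [this]; field_simp; ring
    · push Not at hQ
      have hmax : ∀ l ∈ S, l ≤ p := fun l hl => hpmax l hl ((hgap l hl).resolve_right
        (not_le.2 (hQ l hl)))
      exact ⟨1, φ p - p, Or.inl rfl, fun t ht => by
        rw [hΦ.2.2.1 p hpS hmax t (hpa.trans ht.1)]; ring⟩
  · push Not at hP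
    obtain ⟨m, hmS, hbm, hmmin⟩ := Int.exists_least_ge (a := b) (hS.imp fun l hl =>
      ⟨hl, (hgap l hl).resolve_left (not_le.2 (hP l hl))⟩)
    have hmin : ∀ l ∈ S, m ≤ l := fun l hl => hmmin l hl
      ((hgap l hl).resolve_left (not_le.2 (hP l hl)))
    exact ⟨1, φ m - m, Or.inl rfl, fun t ht => by
      rw [hΦ.2.2.2 m hmS hmin t (ht.2.trans hbm)]; ring⟩

lemma monotone_and_monotone_mul_sub (hΦ : IsLinearExtension S φ Φ) (hS : S.Nonempty) {K : ℝ}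
    (hK : 1 ≤ K) (hmono : ∀ p ∈ S, ∀ q ∈ S, p ≤ q → φ p ≤ φ q)
    (hslope : ∀ p ∈ S, ∀ q ∈ S, p < q → ((φ q : ℝ) - φ p) ≤ K * (q - p)) :
    Monotone Φ ∧ Monotone fun t => K * t - Φ t := by
  have hcell (n : ℤ) : ∃ α β : ℝ, 0 ≤ α ∧ α ≤ K ∧ EqOn Φ (fun t => α * t + β) (Icc n (n + 1)) := by
    obtain ⟨α, β, hα, hEq⟩ := exists_eqOn_affine hΦ hS (lt_add_one (n : ℝ)) fun l _ => by
      rcases le_or_gt l n with h | h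
      · exact Or.inl (by exact_mod_cast h)
      · exact Or.inr (by exact_mod_cast h)
    refine ⟨α, β, ?_, ?_, hEq⟩ <;> rcases hα with rfl | ⟨p, hp, q, hq, hpq, rfl⟩
    · exact zero_le_one
    · have : (p : ℝ) < q := by exact_mod_cast hpq
      exact div_nonneg (sub_nonneg.2 (by exact_mod_cast hmono p hp q hq hpq.le)) (by linarith)
    · exact hK
    · have : (p : ℝ) < q := by exact_mod_cast hpq
      exact (div_le_iff₀ (by linarith)).2 (hslope p hp q hq hpq)
  constructor <;> refine monotone_of_monotoneOn_Icc_int fun n t ht t' ht' htt' => ?_ <;>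
    obtain ⟨α, β, hα, hαK, hEq⟩ := hcell n
  · rw [hEq ht, hEq ht']; dsimp only; nlinarith
  · show K * t - Φ t ≤ K * t' - Φ t'
    rw [hEq ht, hEq ht']; dsimp only; nlinarith

end IsLinearExtension

def dyadicLevel (r : ℝ) : ℤ := -⌈Real.logb 2 r⌉

section DyadicLevel

variable {r : ℝ}

lemma dyadicLevel_le_iff (hr : 0 < r) {n : ℤ} : dyadicLevel r ≤ n ↔ (2 : ℝ) ^ (-n - 1) < r := by
  rw [dyadicLevel, neg_le, ← Int.sub_one_lt_iff, Int.lt_ceil,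
    Real.lt_logb_iff_rpow_lt one_lt_two hr, Real.rpow_intCast]

lemma le_dyadicLevel_iff (hr : 0 < r) {n : ℤ} : n ≤ dyadicLevel r ↔ r ≤ (2 : ℝ) ^ (-n) := by
  rw [dyadicLevel, le_neg, Int.ceil_le, Real.logb_le_iff_le_rpow one_lt_two hr, Real.rpow_intCast]

lemma dyadicLevel_le_neg_logb (r : ℝ) : (dyadicLevel r : ℝ) ≤ -Real.logb 2 r := by
  have := Int.le_ceil (Real.logb 2 r)
  push_cast [dyadicLevel]; linarith

lemma neg_logb_lt_dyadicLevel_add_one (r : ℝ) : -Real.logb 2 r < dyadicLevel r + 1 := by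
  have := Int.ceil_lt_add_one (Real.logb 2 r)
  push_cast [dyadicLevel]; linarith

end DyadicLevel

section Spectrum

variable {Z : Type u} [MetricSpace Z] {x y z : Z} {l : ℤ}

lemma mem_dyadicAnnulus_iff :
    z ∈ dyadicAnnulus x l ↔ 0 < dist z x ∧ dyadicLevel (dist z x) = l := by
  constructor
  · rintro ⟨hfar, hnear⟩
    have hpos : 0 < dist z x := (zpow_pos two_pos _).trans hfar
    exact ⟨hpos, le_antisymm ((dyadicLevel_le_iff hpos).2 hfar) ((le_dyadicLevel_iff hpos).2 hnear)⟩
  · rintro ⟨hpos, rfl⟩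
    exact ⟨(dyadicLevel_le_iff hpos).1 le_rfl, (le_dyadicLevel_iff hpos).1 le_rfl⟩

lemma dyadicLevel_mem_scaleSpectrum (h : z ≠ x) : dyadicLevel (dist z x) ∈ scaleSpectrum x :=
  ⟨z, mem_dyadicAnnulus_iff.2 ⟨dist_pos.2 h, rfl⟩⟩

lemma exists_two_zpow_lt_dist_iff :
    (∃ u, (2 : ℝ) ^ (-l - 1) < dist u x) ↔ ∃ j ∈ scaleSpectrum x, j ≤ l := by
  constructor
  · rintro ⟨u, hu⟩
    have hpos : 0 < dist u x := (zpow_pos two_pos _).trans hu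
    exact ⟨_, dyadicLevel_mem_scaleSpectrum (dist_pos.1 hpos), (dyadicLevel_le_iff hpos).2 hu⟩
  · rintro ⟨j, ⟨z, hz⟩, hjl⟩
    obtain ⟨hpos, rfl⟩ := mem_dyadicAnnulus_iff.1 hz
    exact ⟨z, (dyadicLevel_le_iff hpos).1 hjl⟩

lemma exists_mem_scaleSpectrum_of_dist_le (hl : l ∈ scaleSpectrum x)
    (hxy : dist x y ≤ (2 : ℝ) ^ (-l - 2)) : ∃ j ∈ scaleSpectrum y, l - 1 ≤ j ∧ j ≤ l + 1 := by
  obtain ⟨z, hfar, hnear⟩ := hl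
  have h1 : (2 : ℝ) ^ (-l - 1) = 2 * 2 ^ (-l - 2) := by
    rw [show -l - 1 = -l - 2 + 1 by ring, zpow_add_one₀ two_ne_zero]; ring
  have h2 : (2 : ℝ) ^ (-l) = 4 * 2 ^ (-l - 2) := by
    rw [show -l = -l - 2 + 2 by ring, zpow_add₀ two_ne_zero]; norm_num; ring
  have h3 : (2 : ℝ) ^ (-(l - 1)) = 8 * 2 ^ (-l - 2) := by
    rw [show -(l - 1) = -l - 2 + 3 by ring, zpow_add₀ two_ne_zero]; norm_num; ring
  have hlow : (2 : ℝ) ^ (-(l + 1) - 1) < dist z y := by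
    rw [show -(l + 1) - 1 = -l - 2 by ring]
    linarith [dist_triangle z y x, dist_comm x y]
  have hhigh : dist z y ≤ (2 : ℝ) ^ (-(l - 1)) := by
    linarith [dist_triangle z x y, zpow_pos (two_pos : (0 : ℝ) < 2) (-l - 2)]
  have hpos : 0 < dist z y := (zpow_pos two_pos _).trans hlow
  exact ⟨_, dyadicLevel_mem_scaleSpectrum (dist_pos.1 hpos),
    (le_dyadicLevel_iff hpos).2 hhigh, (dyadicLevel_le_iff hpos).2 hlow⟩

end Spectrum

section PhiMap

variable {Z : Type u} {W : Type v} [MetricSpace Z] [MetricSpace W] {f : Z → W} {x : Z}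

lemma phiMap_eq_sSup_image (hinj : Injective f) (x : Z) (l : ℤ) :
    phiMap f x l = sSup ((fun u => dyadicLevel (dist (f u) (f x))) ''
      {u | (2 : ℝ) ^ (-l - 1) < dist u x}) := by
  unfold phiMap
  congr 1
  ext l'
  simp only [mem_dyadicAnnulus_iff, mem_image, mem_ofPred_eq]
  refine exists_congr fun u => ⟨fun ⟨hu, _, hl'⟩ => ⟨hu, hl'⟩, fun ⟨hu, hl'⟩ => ⟨hu, ?_, hl'⟩⟩
  exact dist_pos.2 (hinj.ne (dist_pos.1 ((zpow_pos two_pos _).trans hu)))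

lemma phiMap_eq_of_forall_mem_scaleSpectrum {p n : ℤ} (hpn : p ≤ n)
    (hgap : ∀ j ∈ scaleSpectrum x, j ≤ p ∨ n < j) : phiMap f x n = phiMap f x p := by
  have hfar (u : Z) : (2 : ℝ) ^ (-n - 1) < dist u x ↔ (2 : ℝ) ^ (-p - 1) < dist u x := by
    refine ⟨fun hu => ?_, fun hu => (zpow_le_zpow_right₀ one_le_two (by omega)).trans_lt hu⟩
    have hpos : 0 < dist u x := (zpow_pos two_pos _).trans hu
    rw [← dyadicLevel_le_iff hpos] at hu ⊢
    exact (hgap _ (dyadicLevel_mem_scaleSpectrum (dist_pos.1 hpos))).resolve_right (by omega)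
  simp only [phiMap, hfar]

lemma phiMap_le_apply {Φ : ℝ → ℝ} (hΦ : IsLinearExtension (scaleSpectrum x) (phiMap f x) Φ)
    (hmono : Monotone Φ) {n : ℤ} (hn : ∃ j ∈ scaleSpectrum x, j ≤ n) :
    (phiMap f x n : ℝ) ≤ Φ n := by
  obtain ⟨p, hp, hpn, hpmax⟩ := Int.exists_greatest_le (a := n) (hn.imp fun j hj =>
    ⟨hj.1, by exact_mod_cast hj.2⟩)
  have hpn' : p ≤ n := by exact_mod_cast hpn
  have hgap (j : ℤ) (hj : j ∈ scaleSpectrum x) : j ≤ p ∨ n < j := by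
    rcases le_or_gt j n with h | h
    · exact Or.inl (hpmax j hj (by exact_mod_cast h))
    · exact Or.inr h
  rw [phiMap_eq_of_forall_mem_scaleSpectrum hpn' hgap, ← hΦ.1 p hp]
  exact hmono hpn

end PhiMap

lemma etaPQS_le_mul_rpow {theta lam r R : ℝ} (htheta : 0 < theta) (hlam : 0 ≤ lam) (hr : 0 ≤ r)
    (hR : 1 ≤ R) (hrR : r ≤ R) : etaPQS theta lam r ≤ lam * R ^ theta := by
  unfold etaPQS
  split_ifs with h
  · exact mul_le_mul_of_nonneg_left ((Real.rpow_le_one hr h.le (by positivity)).trans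
      (Real.one_le_rpow hR htheta.le)) hlam
  · exact mul_le_mul_of_nonneg_left (Real.rpow_le_rpow hr hrR htheta.le) hlam

namespace IsPQS

variable {Z : Type u} {W : Type v} [MetricSpace Z] [MetricSpace W] {theta lam : ℝ} {f : Z → W}

lemma dist_le_mul (hf : IsPQS theta lam f) (hinj : Injective f) (htheta : 0 < theta)
    (hlam : 0 ≤ lam) {a b c : Z} (hbc : b ≠ c) {R : ℝ} (hR : 1 ≤ R)
    (h : dist a c ≤ R * dist b c) :
    dist (f a) (f c) ≤ lam * R ^ theta * dist (f b) (f c) := by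
  have hbc' : 0 < dist b c := dist_pos.2 hbc
  have hη := etaPQS_le_mul_rpow htheta hlam (div_nonneg dist_nonneg hbc'.le) hR
    ((div_le_iff₀ hbc').2 h)
  rw [← div_le_iff₀ (dist_pos.2 (hinj.ne hbc))]
  exact (hf a b c hbc).trans hη

lemma dyadicLevel_le (hf : IsPQS theta lam f) (hinj : Injective f) (htheta : 0 < theta)
    (hlam : 0 < lam) {a b c : Z} (hac : a ≠ c) (hbc : b ≠ c) {e : ℤ} (he : 0 ≤ e)
    (h : dist a c ≤ (2 : ℝ) ^ e * dist b c) :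
    (dyadicLevel (dist (f b) (f c)) : ℝ) ≤
      dyadicLevel (dist (f a) (f c)) + theta * e + (Real.logb 2 lam + 1) := by
  have hR : (2 : ℝ) ^ e = 2 ^ (e : ℝ) := (Real.rpow_intCast 2 e).symm
  have hA : 0 < dist (f a) (f c) := dist_pos.2 (hinj.ne hac)
  have hB : 0 < dist (f b) (f c) := dist_pos.2 (hinj.ne hbc)
  have hle := dist_le_mul hf hinj htheta hlam.le hbc (one_le_zpow₀ one_le_two he) h
  rw [hR, ← Real.rpow_mul zero_le_two] at hle
  have hlog := Real.logb_le_logb_of_le (b := 2) one_lt_two hA hle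
  rw [Real.logb_mul (by positivity) hB.ne', Real.logb_mul hlam.ne' (by positivity),
    Real.logb_rpow two_pos (by norm_num)] at hlog
  linarith [dyadicLevel_le_neg_logb (dist (f b) (f c)),
    neg_logb_lt_dyadicLevel_add_one (dist (f a) (f c))]


section ScaleMap

variable {x : Z} (hf : IsPQS theta lam f) (hinj : Injective f) (htheta : 0 < theta)
include hf hinj htheta

lemma dyadicLevel_le_of_mem_dyadicAnnulus (hlam : 0 < lam) {z u : Z} {j l : ℤ}
    (hz : z ∈ dyadicAnnulus x j) (hu : (2 : ℝ) ^ (-l - 1) < dist u x) (hjl : j ≤ l + 1) :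
    (dyadicLevel (dist (f u) (f x)) : ℝ) ≤
      dyadicLevel (dist (f z) (f x)) + theta * (l - j + 1) + (Real.logb 2 lam + 1) := by
  have hux : u ≠ x := dist_pos.1 ((zpow_pos two_pos _).trans hu)
  have hzx : z ≠ x := dist_pos.1 ((zpow_pos two_pos _).trans hz.1)
  have hd : dist z x ≤ (2 : ℝ) ^ (l - j + 1) * dist u x := by
    calc dist z x ≤ (2 : ℝ) ^ (-j) := hz.2
      _ = (2 : ℝ) ^ (l - j + 1) * 2 ^ (-l - 1) := by
        rw [← zpow_add₀ two_ne_zero]; ring_nf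
      _ ≤ (2 : ℝ) ^ (l - j + 1) * dist u x := by gcongr
  exact_mod_cast dyadicLevel_le hf hinj htheta hlam hzx hux (by omega) hd

variable (hlam : 0 < lam)
include hlam

lemma bddAbove_dyadicLevel_image {l : ℤ} {u₀ : Z} (hu₀ : (2 : ℝ) ^ (-l - 1) < dist u₀ x) :
    BddAbove ((fun u => dyadicLevel (dist (f u) (f x))) ''
      {u | (2 : ℝ) ^ (-l - 1) < dist u x}) := by
  have hpos : 0 < dist u₀ x := (zpow_pos two_pos _).trans hu₀
  set j := dyadicLevel (dist u₀ x)
  refine ⟨⌊(dyadicLevel (dist (f u₀) (f x)) : ℝ) + theta * (l - j + 1) + (Real.logb 2 lam + 1)⌋,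
    ?_⟩
  rintro _ ⟨u, hu, rfl⟩
  exact Int.le_floor.2 (dyadicLevel_le_of_mem_dyadicAnnulus hf hinj htheta hlam
    (mem_dyadicAnnulus_iff.2 ⟨hpos, rfl⟩) hu (by linarith [(dyadicLevel_le_iff hpos).2 hu₀]))

lemma le_phiMap {l : ℤ} {u : Z} (hu : (2 : ℝ) ^ (-l - 1) < dist u x) :
    dyadicLevel (dist (f u) (f x)) ≤ phiMap f x l := by
  rw [phiMap_eq_sSup_image hinj]
  exact le_csSup (bddAbove_dyadicLevel_image hf hinj htheta hlam hu) ⟨u, hu, rfl⟩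

lemma exists_dyadicLevel_eq_phiMap {l : ℤ} {u₀ : Z} (hu₀ : (2 : ℝ) ^ (-l - 1) < dist u₀ x) :
    ∃ u, (2 : ℝ) ^ (-l - 1) < dist u x ∧ dyadicLevel (dist (f u) (f x)) = phiMap f x l := by
  rw [phiMap_eq_sSup_image hinj]
  obtain ⟨u, hu, hφ⟩ := Int.csSup_mem (Set.Nonempty.image _ ⟨u₀, hu₀⟩)
    (bddAbove_dyadicLevel_image hf hinj htheta hlam hu₀)
  exact ⟨u, hu, hφ⟩

lemma phiMap_mono {l l' : ℤ} (hl : ∃ j ∈ scaleSpectrum x, j ≤ l) (hll' : l ≤ l') :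
    phiMap f x l ≤ phiMap f x l' := by
  obtain ⟨u₀, hu₀⟩ := exists_two_zpow_lt_dist_iff.2 hl
  obtain ⟨u, hu, hφ⟩ := exists_dyadicLevel_eq_phiMap hf hinj htheta hlam hu₀
  exact hφ ▸ le_phiMap hf hinj htheta hlam
    ((zpow_le_zpow_right₀ one_le_two (by omega)).trans_lt hu)

lemma phiMap_le_add {j l : ℤ} (hj : j ∈ scaleSpectrum x) (hjl : j ≤ l) :
    (phiMap f x l : ℝ) ≤ phiMap f x j + theta * (l - j + 1) + (Real.logb 2 lam + 1) := by
  obtain ⟨z, hz⟩ := hj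
  obtain ⟨u, hu, hφ⟩ := exists_dyadicLevel_eq_phiMap hf hinj htheta hlam (l := l)
    ((zpow_le_zpow_right₀ one_le_two (by omega)).trans_lt hz.1)
  have hz' : dyadicLevel (dist (f z) (f x)) ≤ phiMap f x j := le_phiMap hf hinj htheta hlam hz.1
  rw [← hφ]
  linarith [dyadicLevel_le_of_mem_dyadicAnnulus hf hinj htheta hlam hz hu (by omega),
    (Int.cast_le (R := ℝ)).2 hz']

lemma phiMap_le_phiMap_add {y : Z} {j : ℤ} (hxy : dist x y ≤ (2 : ℝ) ^ (-j))
    (hj : ∃ i ∈ scaleSpectrum x, i ≤ j) :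
    (phiMap f x j : ℝ) ≤ phiMap f y (j + 1) + (2 * theta + (Real.logb 2 lam + 1)) ∧
      ∃ i ∈ scaleSpectrum y, i ≤ j + 1 := by
  obtain ⟨u₀, hu₀⟩ := exists_two_zpow_lt_dist_iff.2 hj
  obtain ⟨u, hu, hφ⟩ := exists_dyadicLevel_eq_phiMap hf hinj htheta hlam hu₀
  have hux : u ≠ x := dist_pos.1 ((zpow_pos two_pos _).trans hu)
  have h1 : (2 : ℝ) ^ (-j) = 2 * 2 ^ (-j - 1) := by
    rw [zpow_sub_one₀ two_ne_zero]; ring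
  have h2 : (2 : ℝ) ^ (-j - 1) = 2 * 2 ^ (-(j + 1) - 1) := by
    rw [show -(j + 1) - 1 = -j - 1 - 1 by ring, zpow_sub_one₀ two_ne_zero (-j - 1)]; ring
  -- Of `u` and `x`, the one farther from `y` serves as the far point for `y`.
  have key : ∀ b c : Z, b ≠ c → dist c y ≤ 4 * dist b c →
      max (dist u y) (dist x y) ≤ dist c y →
      (dyadicLevel (dist (f b) (f c)) : ℝ) ≤
          phiMap f y (j + 1) + (2 * theta + (Real.logb 2 lam + 1)) ∧
        ∃ i ∈ scaleSpectrum y, i ≤ j + 1 := by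
    intro b c hbc hcy hmax
    have hfar : (2 : ℝ) ^ (-(j + 1) - 1) < dist c y := by
      linarith [dist_triangle u y x, dist_comm x y, le_max_left (dist u y) (dist x y),
        le_max_right (dist u y) (dist x y)]
    have hyc : y ≠ c := (dist_pos.1 ((zpow_pos two_pos _).trans hfar)).symm
    have hQS := dyadicLevel_le hf hinj htheta hlam hyc hbc (e := 2) (by norm_num)
      (by rw [dist_comm y c]; norm_num; exact hcy)
    have hle : dyadicLevel (dist (f c) (f y)) ≤ phiMap f y (j + 1) :=
      le_phiMap hf hinj htheta hlam hfar
    rw [dist_comm (f y)] at hQS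
    push_cast at hQS
    exact ⟨by linarith [(Int.cast_le (R := ℝ)).2 hle],
      exists_two_zpow_lt_dist_iff.1 ⟨c, hfar⟩⟩
  rw [← hφ]
  rcases le_total (dist x y) (dist u y) with h | h
  · have := key x u hux.symm (by linarith [dist_triangle u x y, dist_comm u x]) (by simp [h])
    rwa [dist_comm (f x)] at this
  · exact key u x hux (by linarith [dist_comm y x, dist_nonneg (x := u) (y := x)]) (by simp [h])

end ScaleMap

section Extension

variable {x y : Z} {Φx Φy : ℝ → ℝ}
variable (hf : IsPQS theta lam f) (hinj : Injective f) (htheta : 0 < theta) (hlam : 1 ≤ lam)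
include hf hinj htheta hlam

lemma monotone_and_monotone_mul_sub {Φ : ℝ → ℝ}
    (hΦ : IsLinearExtension (scaleSpectrum x) (phiMap f x) Φ) (hS : (scaleSpectrum x).Nonempty) :
    Monotone Φ ∧ Monotone fun t => (2 * theta + (Real.logb 2 lam + 1)) * t - Φ t := by
  have hlog := Real.logb_nonneg one_lt_two hlam
  have hlam' : 0 < lam := by linarith
  refine IsLinearExtension.monotone_and_monotone_mul_sub hΦ hS (by linarith)
    (fun p hp q _ hpq => phiMap_mono hf hinj htheta hlam' ⟨p, hp, le_rfl⟩ hpq)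
    (fun p hp q _ hpq => ?_)
  have hgrowth := phiMap_le_add hf hinj htheta hlam' hp hpq.le
  have hpq' : (1 : ℝ) ≤ q - p := by exact_mod_cast Int.sub_pos_of_lt hpq
  nlinarith

section Comparison

variable (hΦx : IsLinearExtension (scaleSpectrum x) (phiMap f x) Φx)
  (hΦy : IsLinearExtension (scaleSpectrum y) (phiMap f y) Φy)
  (hy : Monotone Φy) (hy' : Monotone fun t => (2 * theta + (Real.logb 2 lam + 1)) * t - Φy t)
include hΦx hΦy hy hy'

lemma apply_le_apply_add_of_mem {j : ℤ} (hj : j ∈ scaleSpectrum x)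
    (hxy : dist x y ≤ (2 : ℝ) ^ (-j)) :
    Φx j ≤ Φy j + 2 * (2 * theta + (Real.logb 2 lam + 1)) := by
  obtain ⟨hcmp, hfar⟩ := phiMap_le_phiMap_add hf hinj htheta (by linarith) hxy ⟨j, hj, le_rfl⟩
  have hφy := phiMap_le_apply hΦy hy hfar
  have hstep := hy' (show (j : ℝ) ≤ (j + 1 : ℤ) by push_cast; linarith)
  push_cast at hφy hstep
  rw [hΦx.1 j hj]
  linarith

variable (hx : Monotone Φx)
  (hx' : Monotone fun t => (2 * theta + (Real.logb 2 lam + 1)) * t - Φx t)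
include hx hx'

lemma apply_le_apply_add_of_gap {p q : ℤ} (hp : p ∈ scaleSpectrum x) (hq : q ∈ scaleSpectrum x)
    (hpq : p + 2 < q) (hgap : ∀ l ∈ scaleSpectrum x, l ≤ p ∨ q ≤ l)
    (hxy : dist x y ≤ (2 : ℝ) ^ (-q)) (hSy : (scaleSpectrum y).Nonempty)
    {s : ℝ} (hs : s ∈ Icc ((p : ℝ) + 1) (q - 1)) :
    Φx s ≤ Φy s + 3 * (2 * theta + (Real.logb 2 lam + 1)) := by
  have hab : (p : ℝ) + 1 < q - 1 := by
    have : ((p + 2 : ℤ) : ℝ) < q := by exact_mod_cast hpq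
    push_cast at this; linarith
  have hgapx : ∀ l ∈ scaleSpectrum x, (l : ℝ) ≤ p + 1 ∨ (q : ℝ) - 1 ≤ l := fun l hl =>
    (hgap l hl).imp (fun h => by linarith [(Int.cast_le (R := ℝ)).2 h])
      (fun h => by linarith [(Int.cast_le (R := ℝ)).2 h])
  -- A spectral point of `y` inside the gap would transfer to one of `x`.
  have hgapy : ∀ i ∈ scaleSpectrum y, (i : ℝ) ≤ p + 1 ∨ (q : ℝ) - 1 ≤ i := by
    intro i hi
    by_contra! hin
    have hpi : p + 1 < i := by exact_mod_cast hin.1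
    have hiq : i < q - 1 := by exact_mod_cast hin.2
    obtain ⟨j, hj, hij, hji⟩ := exists_mem_scaleSpectrum_of_dist_le hi
      ((dist_comm y x).trans_le (hxy.trans (zpow_le_zpow_right₀ one_le_two (by omega))))
    rcases hgap j hj with h | h <;> omega
  obtain ⟨α, β, -, hαx⟩ := IsLinearExtension.exists_eqOn_affine hΦx ⟨q, hq⟩ hab hgapx
  obtain ⟨α', β', -, hαy⟩ := IsLinearExtension.exists_eqOn_affine hΦy hSy hab hgapy
  have hleft := sub_le_sub_add_mul_abs hx hx' hy hy' ((p : ℝ) + 1) p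
  have hright := sub_le_sub_add_mul_abs hx hx' hy hy' ((q : ℝ) - 1) q
  have hEp := apply_le_apply_add_of_mem hf hinj htheta hlam hΦx hΦy hy hy' hp
    (hxy.trans (zpow_le_zpow_right₀ one_le_two (by omega)))
  have hEq := apply_le_apply_add_of_mem hf hinj htheta hlam hΦx hΦy hy hy' hq hxy
  rw [add_sub_cancel_left, abs_one, mul_one] at hleft
  rw [sub_sub_cancel_left, abs_neg, abs_one, mul_one] at hright
  have hmax : max (Φx (p + 1) - Φy (p + 1)) (Φx (q - 1) - Φy (q - 1)) ≤
      3 * (2 * theta + (Real.logb 2 lam + 1)) := max_le (by linarith) (by linarith)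
  linarith [sub_le_max_of_eqOn_affine hαx hαy hs]

lemma apply_le_apply_add_of_forall_le {q : ℤ} (hq : q ∈ scaleSpectrum x)
    (hmin : ∀ l ∈ scaleSpectrum x, q ≤ l) (hxy : dist x y ≤ (2 : ℝ) ^ (-q))
    (hSy : (scaleSpectrum y).Nonempty) {s : ℝ} (hs : s ≤ q - 1) :
    Φx s ≤ Φy s + 3 * (2 * theta + (Real.logb 2 lam + 1)) := by
  have hSy_ge : ∀ i ∈ scaleSpectrum y, ((q : ℝ) - 1) ≤ i := by
    intro i hi
    by_contra! hiq
    have hiq' : i < q - 1 := by exact_mod_cast hiq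
    obtain ⟨j, hj, -, hji⟩ := exists_mem_scaleSpectrum_of_dist_le hi
      ((dist_comm y x).trans_le (hxy.trans (zpow_le_zpow_right₀ one_le_two (by omega))))
    linarith [hmin j hj]
  obtain ⟨m, hm, hqm, hmmin⟩ := Int.exists_least_ge (hSy.imp fun i hi => ⟨hi, hSy_ge i hi⟩)
  have hmin_y : ∀ l ∈ scaleSpectrum y, m ≤ l := fun l hl => hmmin l hl (hSy_ge l hl)
  have hq1 : (q : ℝ) - 1 ≤ q := by linarith
  -- Below `q - 1` both extensions are in their slope-one tails, so `Φx - Φy` is constant there.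
  have htail : Φx s - Φy s = Φx (q - 1) - Φy (q - 1) := by
    rw [hΦx.2.2.2 q hq hmin _ (hs.trans hq1), hΦx.2.2.2 q hq hmin _ hq1,
      hΦy.2.2.2 m hm hmin_y _ (hs.trans hqm), hΦy.2.2.2 m hm hmin_y _ hqm]
    ring
  have hright := sub_le_sub_add_mul_abs hx hx' hy hy' ((q : ℝ) - 1) q
  rw [sub_sub_cancel_left, abs_neg, abs_one, mul_one] at hright
  have hEq := apply_le_apply_add_of_mem hf hinj htheta hlam hΦx hΦy hy hy' hq hxy
  linarith

lemma apply_le_apply_add_of_forall_two_lt_abs {l₀ : ℤ} (hl₀ : l₀ ∈ scaleSpectrum x)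
    (hSy : (scaleSpectrum y).Nonempty) (hxy : dist x y ≤ (2 : ℝ) ^ (-l₀)) {s : ℝ}
    (hsl₀ : s < l₀ + 1) (hfar : ∀ j ∈ scaleSpectrum x, j ≤ l₀ → 2 < |s - j|) :
    Φx s ≤ Φy s + 3 * (2 * theta + (Real.logb 2 lam + 1)) := by
  have hfar' (j : ℤ) (hj : j ∈ scaleSpectrum x) (hjl₀ : j ≤ l₀) : s + 2 < j ∨ (j : ℝ) + 2 < s :=
    (lt_abs.1 (hfar j hj hjl₀)).symm.imp (by intro h; linarith) (by intro h; linarith)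
  have hsl₀' : s ≤ l₀ := by
    rcases hfar' l₀ hl₀ le_rfl with h | h <;> linarith
  obtain ⟨q, hq, hsq, hqmin⟩ := Int.exists_least_ge ⟨l₀, hl₀, hsl₀'⟩
  have hql₀ : q ≤ l₀ := hqmin l₀ hl₀ hsl₀'
  have hxq : dist x y ≤ (2 : ℝ) ^ (-q) := hxy.trans (zpow_le_zpow_right₀ one_le_two (by omega))
  have hsq' : s + 2 < q := (hfar' q hq hql₀).resolve_right (by intro h; linarith)
  by_cases hbelow : ∃ l ∈ scaleSpectrum x, (l : ℝ) ≤ s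
  · obtain ⟨p, hp, hps, hpmax⟩ := Int.exists_greatest_le hbelow
    have hps' : (p : ℝ) + 2 < s :=
      (hfar' p hp (by exact_mod_cast hps.trans hsl₀')).resolve_left (by intro h; linarith)
    have hpq : p + 2 < q := by exact_mod_cast (by linarith : (p : ℝ) + 2 < q)
    have hgap (l : ℤ) (hl : l ∈ scaleSpectrum x) : l ≤ p ∨ q ≤ l :=
      (le_total (l : ℝ) s).imp (hpmax l hl) (hqmin l hl)
    exact apply_le_apply_add_of_gap hf hinj htheta hlam hΦx hΦy hy hy' hx hx' hp hq hpq hgap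
      hxq hSy ⟨by linarith, by linarith⟩
  · push Not at hbelow
    exact apply_le_apply_add_of_forall_le hf hinj htheta hlam hΦx hΦy hy hy' hx hx' hq
      (fun l hl => hqmin l hl (hbelow l hl).le) hxq hSy (by linarith)

end Comparison

lemma apply_le_apply_add (hΦx : IsLinearExtension (scaleSpectrum x) (phiMap f x) Φx)
    (hΦy : IsLinearExtension (scaleSpectrum y) (phiMap f y) Φy) (hxy : x ≠ y) {s : ℝ}
    (hs : s ≤ -Real.logb 2 (dist x y)) :
    Φx s ≤ Φy s + 4 * (2 * theta + (Real.logb 2 lam + 1)) := by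
  have hpos : 0 < dist x y := dist_pos.2 hxy
  set l₀ := dyadicLevel (dist x y)
  have hlx : l₀ ∈ scaleSpectrum x := by
    simpa only [l₀, dist_comm] using dyadicLevel_mem_scaleSpectrum (x := x) hxy.symm
  have hly : l₀ ∈ scaleSpectrum y := dyadicLevel_mem_scaleSpectrum hxy
  have hdist (j : ℤ) (hj : j ≤ l₀) : dist x y ≤ (2 : ℝ) ^ (-j) := (le_dyadicLevel_iff hpos).1 hj
  have hsl₀ : s < l₀ + 1 := hs.trans_lt (neg_logb_lt_dyadicLevel_add_one _)
  obtain ⟨hx, hx'⟩ := monotone_and_monotone_mul_sub hf hinj htheta hlam hΦx ⟨l₀, hlx⟩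
  obtain ⟨hy, hy'⟩ := monotone_and_monotone_mul_sub hf hinj htheta hlam hΦy ⟨l₀, hly⟩
  have hK : 0 ≤ 2 * theta + (Real.logb 2 lam + 1) := by
    linarith [Real.logb_nonneg one_lt_two hlam]
  by_cases hnear : ∃ j ∈ scaleSpectrum x, j ≤ l₀ ∧ |s - j| ≤ 2
  · obtain ⟨j, hj, hjl₀, hsj⟩ := hnear
    have hE := apply_le_apply_add_of_mem hf hinj htheta hlam hΦx hΦy hy hy' hj (hdist j hjl₀)
    linarith [sub_le_sub_add_mul_abs hx hx' hy hy' s j, mul_le_mul_of_nonneg_left hsj hK]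
  linarith [apply_le_apply_add_of_forall_two_lt_abs hf hinj htheta hlam hΦx hΦy hy hy' hx hx'
    hlx ⟨l₀, hly⟩ (hdist l₀ le_rfl) hsl₀ (by simpa only [not_exists, not_and, not_le] using hnear)]

end Extension

end IsPQS

/-- for `t ≥ d_Z(x,y)`,
`|Φ_x(log₂(1/t)) − Φ_y(log₂(1/t))| ≤ C(θ,λ)`. -/
theorem stmt15 (theta lam : ℝ) (htheta : 1 ≤ theta) (hlam : 1 ≤ lam) :
    ∃ C : ℝ, 0 ≤ C ∧
      ∀ (Z : Type u) (W : Type v) [MetricSpace Z] [MetricSpace W],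
        AtLeastThree Z → AtLeastThree W →
        ∀ (f : Z ≃ₜ W), IsPQS theta lam f →
        ∀ (x y : Z), x ≠ y →
        ∀ Phix Phiy : ℝ → ℝ,
          IsLinearExtension (scaleSpectrum x) (phiMap f x) Phix →
          IsLinearExtension (scaleSpectrum y) (phiMap f y) Phiy →
          ∀ t : ℝ, dist x y ≤ t →
            |Phix (Real.logb 2 (1 / t)) - Phiy (Real.logb 2 (1 / t))| ≤ C := by
  have hlog := Real.logb_nonneg one_lt_two hlam
  refine ⟨4 * (2 * theta + (Real.logb 2 lam + 1)), by positivity, ?_⟩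
  intro Z W _ _ _ _ f hf x y hxy Phix Phiy hx hy t ht
  have htheta' : 0 < theta := by linarith
  have hs : Real.logb 2 (1 / t) ≤ -Real.logb 2 (dist x y) := by
    rw [one_div, Real.logb_inv, neg_le_neg_iff]
    exact Real.logb_le_logb_of_le one_lt_two (dist_pos.2 hxy) ht
  rw [abs_le]
  constructor
  · linarith [IsPQS.apply_le_apply_add hf f.injective htheta' hlam hy hx hxy.symm
      (dist_comm x y ▸ hs)]
  · linarith [IsPQS.apply_le_apply_add hf f.injective htheta' hlam hx hy hxy hs]
end
end
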